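/- arXiv:2303.11671 — 4 statements merged into one kernel-verified Lean document; each statement's English description precedes it below -/
import Mathlib

section
/- For every x ∈ G≀S(n) and all t_1,…,t_k (as a polynomial identity): Σ_{x̃ ∈ G≀S(n+1): p_{n,n+1}(x̃) = x} t_1^{[x̃]_{c_1}}⋯t_k^{[x̃]_{c_k}} = (|G|·n + |c_1|·t_1 + ⋯ + |c_k|·t_k)·t_1^{[x]_{c_1}}⋯t_k^{[x]_{c_k}}. -/
namespace WreathPaper

/-- The permutation action of `S(n)` on `G^n`. -/
def permAut (G : Type*) [Group G] (n : ℕ) : Equiv.Perm (Fin n) →* MulAut (Fin n → G) where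
  toFun s :=
    { toFun := fun g => g ∘ s.symm
      invFun := fun g => g ∘ s
      left_inv := fun g => funext fun i => by simp
      right_inv := fun g => funext fun i => by simp
      map_mul' := fun g h => rfl }
  map_one' := by ext g i; rfl
  map_mul' := fun s t => by ext g i; rfl

/-- The wreath product `G ≀ S(n)`: underlying set `G^n × S(n)` with
`((g₁,…,gₙ),s)·((h₁,…,hₙ),t) = ((g₁h_{s⁻¹(1)},…,g_nh_{s⁻¹(n)}), st)`. -/
abbrev WP (G : Type*) [Group G] (n : ℕ) :=
  SemidirectProduct (Fin n → G) (Equiv.Perm (Fin n)) (permAut G n)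

namespace WP

variable {G : Type*} [Group G] {n : ℕ}

def wpEquivProd (G : Type*) [Group G] (n : ℕ) :
    WP G n ≃ (Fin n → G) × Equiv.Perm (Fin n) where
  toFun x := (x.left, x.right)
  invFun p := ⟨p.1, p.2⟩
  left_inv x := rfl
  right_inv p := rfl

instance [Fintype G] : Fintype (WP G n) := Fintype.ofEquiv _ (wpEquivProd G n).symm
instance [DecidableEq G] : DecidableEq (WP G n) := (wpEquivProd G n).decidableEq

/-- The cycle-product of `x = ((g₁,…,gₙ),s)` corresponding to the cycle of `s`
containing `i` (computed starting at `i`): `g_{s^{r-1}(i)} ⋯ g_{s(i)} g_i`. -/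
noncomputable def cycleProd (x : WP G n) (i : Fin n) : G :=
  (((List.range (Function.minimalPeriod (⇑x.right) i)).reverse).map
    fun j => x.left ((x.right ^ j) i)).prod

/-- `[x]_c`: the number of cycles of `x` whose cycle-product lies in `c`
(cycles are counted via their minimal representative). -/
noncomputable def cycleCount (x : WP G n) (c : Set G) : ℕ :=
  Nat.card {i : Fin n // (∀ m : ℕ, i ≤ (x.right ^ m) i) ∧ cycleProd x i ∈ c}

/-- The number of cycles of `x` of length `j` whose cycle-product lies in `c`. -/
noncomputable def cycleCountLen (x : WP G n) (c : Set G) (j : ℕ) : ℕ :=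
  Nat.card {i : Fin n // (∀ m : ℕ, i ≤ (x.right ^ m) i) ∧
    Function.minimalPeriod (⇑x.right) i = j ∧ cycleProd x i ∈ c}

/-- Removing the point `n+1` from a permutation of `{1,…,n+1}`. -/
def projPerm (s : Equiv.Perm (Fin (n + 1))) : Equiv.Perm (Fin n) :=
  Equiv.removeNone (finSuccEquivLast.symm.trans (s.trans finSuccEquivLast))

/-- The canonical projection `p_{n,n+1} : G ≀ S(n+1) → G ≀ S(n)`. -/
def proj (x : WP G (n + 1)) : WP G n :=
  ⟨fun i => if x.right (Fin.last n) = Fin.castSucc i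
      then x.left (Fin.castSucc i) * x.left (Fin.last n)
      else x.left (Fin.castSucc i),
    projPerm x.right⟩

def castEquiv {m n : ℕ} (h : m ≤ n) : Fin m ≃ {i : Fin n // (i : ℕ) < m} where
  toFun i := ⟨⟨(i : ℕ), lt_of_lt_of_le i.isLt h⟩, i.isLt⟩
  invFun i := ⟨(i.1 : ℕ), i.2⟩
  left_inv i := rfl
  right_inv i := rfl

/-- The canonical embedding `ι_{m,n} : G ≀ S(m) → G ≀ S(n)` for `m ≤ n`. -/
def emb {m n : ℕ} (h : m ≤ n) (x : WP G m) : WP G n :=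
  ⟨fun i => if hi : (i : ℕ) < m then x.left ⟨(i : ℕ), hi⟩ else 1,
    x.right.extendDomain (castEquiv h)⟩

end WP

/-- `c` is a conjugacy class of `G`. -/
def IsConjClass {G : Type*} [Group G] (c : Set G) : Prop :=
  ∃ g : G, c = {h | IsConj g h}

end WreathPaper

namespace WreathPaper

open Equiv Function



/-- Insert a fixed point at `last n`. -/
def liftPerm {n : ℕ} (s : Perm (Fin n)) : Perm (Fin (n + 1)) where
  toFun := Fin.lastCases (Fin.last n) (fun j => (s j).castSucc)
  invFun := Fin.lastCases (Fin.last n) (fun j => (s.symm j).castSucc)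
  left_inv i := by
    induction i using Fin.lastCases with
    | last => simp
    | cast j => simp
  right_inv i := by
    induction i using Fin.lastCases with
    | last => simp
    | cast j => simp

@[simp] lemma liftPerm_castSucc {n : ℕ} (s : Perm (Fin n)) (i : Fin n) :
    liftPerm s i.castSucc = (s i).castSucc := by
  simp [liftPerm]

@[simp] lemma liftPerm_last {n : ℕ} (s : Perm (Fin n)) :
    liftPerm s (Fin.last n) = Fin.last n := by
  simp [liftPerm]

lemma liftPerm_pow_castSucc {n : ℕ} (s : Perm (Fin n)) (m : ℕ) (i : Fin n) :
    (liftPerm s ^ m) i.castSucc = ((s ^ m) i).castSucc := by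
  induction m with
  | zero => simp
  | succ m ih => rw [pow_succ', Perm.mul_apply, ih, liftPerm_castSucc, pow_succ', Perm.mul_apply]

@[simp] lemma liftPerm_pow_last {n : ℕ} (s : Perm (Fin n)) (m : ℕ) :
    (liftPerm s ^ m) (Fin.last n) = Fin.last n := by
  induction m with
  | zero => simp
  | succ m ih => rw [pow_succ', Perm.mul_apply, ih, liftPerm_last]

lemma perm_mem_periodicPts {N : ℕ} (s : Perm (Fin N)) (i : Fin N) :
    i ∈ periodicPts ⇑s :=
  ⟨orderOf s, orderOf_pos s, by
    show (⇑s)^[orderOf s] i = i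
    simp [Equiv.Perm.iterate_eq_pow, pow_orderOf_eq_one]⟩

lemma perm_pow_minimalPeriod {N : ℕ} (s : Perm (Fin N)) (i : Fin N) :
    (s ^ minimalPeriod ⇑s i) i = i := by
  have := isPeriodicPt_minimalPeriod ⇑s i
  rw [← Equiv.Perm.iterate_eq_pow]; exact this

lemma perm_minimalPeriod_pos {N : ℕ} (s : Perm (Fin N)) (i : Fin N) :
    0 < minimalPeriod ⇑s i :=
  minimalPeriod_pos_of_mem_periodicPts (perm_mem_periodicPts s i)

lemma perm_pow_ne_of_lt_minimalPeriod {N : ℕ} {s : Perm (Fin N)} {i : Fin N} {m : ℕ}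
    (h0 : 0 < m) (hm : m < minimalPeriod ⇑s i) : (s ^ m) i ≠ i := by
  have := not_isPeriodicPt_of_pos_of_lt_minimalPeriod h0.ne' hm
  simpa [IsPeriodicPt, IsFixedPt, Equiv.Perm.iterate_eq_pow] using this

lemma minimalPeriod_congr' {α β : Type*} {f : α → α} {g : β → β} {x : α} {y : β}
    (hx : x ∈ periodicPts f) (h : ∀ m, f^[m] x = x ↔ g^[m] y = y) :
    minimalPeriod f x = minimalPeriod g y := by
  have hy : y ∈ periodicPts g := by
    obtain ⟨m, hm, hfm⟩ := hx
    exact ⟨m, hm, (h m).1 hfm⟩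
  refine le_antisymm ?_ ?_
  · exact IsPeriodicPt.minimalPeriod_le (minimalPeriod_pos_of_mem_periodicPts hy)
      ((h _).2 (isPeriodicPt_minimalPeriod g y))
  · exact IsPeriodicPt.minimalPeriod_le (minimalPeriod_pos_of_mem_periodicPts hx)
      ((h _).1 (isPeriodicPt_minimalPeriod f x))

lemma perm_minimalPeriod_congr {N M : ℕ} {s : Perm (Fin N)} {t : Perm (Fin M)}
    {i : Fin N} {j : Fin M} (h : ∀ m, (s ^ m) i = i ↔ (t ^ m) j = j) :
    minimalPeriod ⇑s i = minimalPeriod ⇑t j :=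
  minimalPeriod_congr' (perm_mem_periodicPts s i) (by
    intro m; simpa [Equiv.Perm.iterate_eq_pow] using h m)

lemma exists_pow_eq_of_pow_eq {N : ℕ} (s : Perm (Fin N)) {i j : Fin N} {m : ℕ}
    (h : (s ^ m) i = j) : ∃ m', (s ^ m') j = i := by
  refine ⟨orderOf s * (m + 1) - m, ?_⟩
  have hle : m ≤ orderOf s * (m + 1) :=
    le_trans (Nat.le_succ m) (Nat.le_mul_of_pos_left _ (orderOf_pos s))
  rw [← h, ← Perm.mul_apply, ← pow_add, Nat.sub_add_cancel hle, pow_mul,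
    pow_orderOf_eq_one, one_pow, Perm.one_apply]



lemma list_prod_shift {G : Type*} [Group G] (u : ℕ → G) (r : ℕ) (hu : u r = u 0) :
    ((List.range r).reverse.map (fun m => u (m + 1))).prod * u 0
      = u 0 * ((List.range r).reverse.map u).prod := by
  have h1 : ((List.range r).reverse.map (fun m => u (m + 1))) ++ [u 0]
      = (List.range (r + 1)).reverse.map u := by
    rw [List.range_succ_eq_map]
    simp [List.map_reverse, List.map_map, Function.comp_def]
  have h2 : (List.range (r + 1)).reverse.map u = u r :: (List.range r).reverse.map u := by
    rw [List.range_succ]; simp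
  calc ((List.range r).reverse.map (fun m => u (m + 1))).prod * u 0
      = (((List.range r).reverse.map (fun m => u (m + 1))) ++ [u 0]).prod := by simp
    _ = ((List.range (r + 1)).reverse.map u).prod := by rw [h1]
    _ = u r * ((List.range r).reverse.map u).prod := by rw [h2, List.prod_cons]
    _ = u 0 * ((List.range r).reverse.map u).prod := by rw [hu]

namespace WP

variable {G : Type*} [Group G] {n : ℕ}

lemma cycleProd_apply (y : WP G n) (i : Fin n) :
    cycleProd y (y.right i) * y.left i = y.left i * cycleProd y i := by
  have hper : Function.minimalPeriod ⇑y.right (y.right i) = Function.minimalPeriod ⇑y.right i :=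
    Function.minimalPeriod_apply (perm_mem_periodicPts _ i)
  unfold cycleProd
  rw [hper]
  have hfun : (fun j => y.left ((y.right ^ j) (y.right i)))
      = fun j => y.left ((y.right ^ (j + 1)) i) := by
    funext j
    rw [pow_succ, Perm.mul_apply]
  rw [hfun]
  exact list_prod_shift (fun m => y.left ((y.right ^ m) i)) _
    (by simp only [perm_pow_minimalPeriod, pow_zero, Perm.one_apply])

lemma cycleProd_apply' (y : WP G n) (i : Fin n) :
    cycleProd y (y.right i) = y.left i * cycleProd y i * (y.left i)⁻¹ :=
  eq_mul_inv_of_mul_eq (cycleProd_apply y i)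

lemma isConj_cycleProd_pow (y : WP G n) (i : Fin n) (m : ℕ) :
    IsConj (cycleProd y i) (cycleProd y ((y.right ^ m) i)) := by
  induction m with
  | zero => rw [pow_zero, Perm.one_apply]
  | succ m ih =>
    have h2 : cycleProd y ((y.right ^ (m + 1)) i)
        = y.left ((y.right ^ m) i) * cycleProd y ((y.right ^ m) i)
            * (y.left ((y.right ^ m) i))⁻¹ := by
      rw [pow_succ', Perm.mul_apply]
      exact cycleProd_apply' y _
    exact ih.trans (h2 ▸ isConj_iff.2 ⟨y.left ((y.right ^ m) i), rfl⟩)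

end WP

lemma IsConjClass.mem_iff {G : Type*} [Group G] {c : Set G} (hc : IsConjClass c) {u v : G}
    (h : IsConj u v) : (u ∈ c ↔ v ∈ c) := by
  obtain ⟨g0, rfl⟩ := hc
  exact ⟨fun hu => hu.trans h, fun hv => hv.trans h.symm⟩

open scoped Classical in
lemma WP.cycleCount_eq_sum {G : Type*} [Group G] {N : ℕ} (y : WP G N) (c : Set G) :
    cycleCount y c = ∑ i : Fin N,
      if (∀ m : ℕ, i ≤ (y.right ^ m) i) ∧ cycleProd y i ∈ c then 1 else 0 := by
  rw [cycleCount, Nat.card_eq_fintype_card, Fintype.card_subtype, Finset.card_filter]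

lemma list_helper {G : Type*} [Group G] (v u : ℕ → G) (w : G) (r' : ℕ)
    (hend : v 0 = u 0 * w) (hmid : ∀ m < r', v (m + 1) = u (m + 1)) :
    ((List.range (r' + 1)).reverse.map v).prod
      = ((List.range (r' + 1)).reverse.map u).prod * w := by
  have key : ∀ f : ℕ → G, ((List.range (r' + 1)).reverse.map f).prod
      = (((List.range r').reverse.map (fun m => f (m + 1)))).prod * f 0 := by
    intro f
    rw [List.range_succ_eq_map]
    simp [List.map_reverse, List.map_map, Function.comp_def]
  rw [key v, key u, hend]
  have : (List.range r').reverse.map (fun m => v (m + 1))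
      = (List.range r').reverse.map (fun m => u (m + 1)) := by
    apply List.map_congr_left
    intro a ha
    exact hmid a (List.mem_range.mp (List.mem_reverse.mp ha))
  rw [this, mul_assoc]

namespace WP

variable {G : Type*} [Group G] {n : ℕ}

/-- Fiber element fixing `last`. -/
def extWP (x : WP G n) (g : G) : WP G (n + 1) :=
  ⟨Fin.snoc x.left g, liftPerm x.right⟩

/-- Fiber element inserting `last` into the cycle before `b`. -/
def insWP (x : WP G n) (g : G) (b : Fin n) : WP G (n + 1) :=
  ⟨Fin.snoc (Function.update x.left b (x.left b * g⁻¹)) g,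
    Equiv.swap b.castSucc (Fin.last n) * liftPerm x.right⟩

@[simp] lemma extWP_right (x : WP G n) (g : G) : (extWP x g).right = liftPerm x.right := rfl
@[simp] lemma extWP_left (x : WP G n) (g : G) : (extWP x g).left = Fin.snoc x.left g := rfl
@[simp] lemma insWP_right (x : WP G n) (g : G) (b : Fin n) :
    (insWP x g b).right = Equiv.swap b.castSucc (Fin.last n) * liftPerm x.right := rfl
@[simp] lemma insWP_left (x : WP G n) (g : G) (b : Fin n) :
    (insWP x g b).left = Fin.snoc (Function.update x.left b (x.left b * g⁻¹)) g := rfl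

lemma liftPerm_minimalPeriod (s : Perm (Fin n)) (j : Fin n) :
    Function.minimalPeriod ⇑(liftPerm s) j.castSucc = Function.minimalPeriod ⇑s j :=
  (perm_minimalPeriod_congr fun m => by
    rw [liftPerm_pow_castSucc]; exact Fin.castSucc_inj)

lemma cycleProd_extWP_castSucc (x : WP G n) (g : G) (j : Fin n) :
    cycleProd (extWP x g) j.castSucc = cycleProd x j := by
  unfold cycleProd
  simp only [extWP_right, extWP_left, liftPerm_minimalPeriod, liftPerm_pow_castSucc,
    Fin.snoc_castSucc]

lemma cycleProd_extWP_last (x : WP G n) (g : G) :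
    cycleProd (extWP x g) (Fin.last n) = g := by
  unfold cycleProd
  have h1 : Function.minimalPeriod ⇑(extWP x g).right (Fin.last n) = 1 :=
    Function.minimalPeriod_eq_one_iff_isFixedPt.2 (by simp [Function.IsFixedPt])
  rw [h1]
  simp

open scoped Classical in
lemma cycleCount_extWP (x : WP G n) (g : G) (c : Set G) :
    cycleCount (extWP x g) c = cycleCount x c + (if g ∈ c then 1 else 0) := by
  classical
  rw [cycleCount_eq_sum, cycleCount_eq_sum, Fin.sum_univ_castSucc]
  congr 1
  · refine Finset.sum_congr rfl fun j _ => ?_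
    refine if_congr (and_congr ?_ ?_) rfl rfl
    · constructor <;> intro H m <;> have := H m <;>
        simpa [liftPerm_pow_castSucc, Fin.castSucc_le_castSucc_iff] using this
    · rw [cycleProd_extWP_castSucc]
  · rw [cycleProd_extWP_last]
    simp

section Ins

variable (x : WP G n) (g : G) (b : Fin n)

lemma insWP_right_castSucc (i : Fin n) :
    (insWP x g b).right i.castSucc
      = if x.right i = b then Fin.last n else (x.right i).castSucc := by
  simp only [insWP_right, Perm.mul_apply, liftPerm_castSucc]
  by_cases h : x.right i = b
  · simp [h, Equiv.swap_apply_left]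
  · rw [Equiv.swap_apply_of_ne_of_ne (by simpa [Fin.castSucc_inj] using h)
      (Fin.castSucc_lt_last _).ne, if_neg h]

lemma insWP_right_last : (insWP x g b).right (Fin.last n) = b.castSucc := by
  simp [Equiv.swap_apply_right]

variable {x g b}

lemma insWP_pow_castSucc_of_not {j : Fin n} (hb : ∀ m : ℕ, (x.right ^ m) j ≠ b) (m : ℕ) :
    ((insWP x g b).right ^ m) j.castSucc = ((x.right ^ m) j).castSucc := by
  induction m with
  | zero => simp
  | succ m ih =>
    rw [pow_succ', Perm.mul_apply, ih, insWP_right_castSucc, if_neg, ← Perm.mul_apply,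
      ← pow_succ']
    intro hh
    exact hb (m + 1) (by rw [pow_succ', Perm.mul_apply, hh])

lemma insWP_pow_castSucc_b {m : ℕ} (hm : m < Function.minimalPeriod ⇑x.right b) :
    ((insWP x g b).right ^ m) b.castSucc = ((x.right ^ m) b).castSucc := by
  induction m with
  | zero => simp
  | succ m ih =>
    rw [pow_succ', Perm.mul_apply, ih (Nat.lt_of_succ_lt hm), insWP_right_castSucc, if_neg,
      ← Perm.mul_apply, ← pow_succ']
    intro hh
    exact perm_pow_ne_of_lt_minimalPeriod (Nat.succ_pos m) hm
      (by rw [pow_succ', Perm.mul_apply, hh])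

lemma insWP_pow_period :
    ((insWP x g b).right ^ Function.minimalPeriod ⇑x.right b) b.castSucc = Fin.last n := by
  obtain ⟨r', hr'⟩ : ∃ r', Function.minimalPeriod ⇑x.right b = r' + 1 :=
    ⟨_, (Nat.succ_pred_eq_of_pos (perm_minimalPeriod_pos x.right b)).symm⟩
  rw [hr', pow_succ', Perm.mul_apply, insWP_pow_castSucc_b (hr' ▸ Nat.lt_succ_self r'),
    insWP_right_castSucc, if_pos]
  rw [← Perm.mul_apply, ← pow_succ', ← hr']
  exact perm_pow_minimalPeriod x.right b

lemma insWP_pow_period_succ :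
    ((insWP x g b).right ^ (Function.minimalPeriod ⇑x.right b + 1)) b.castSucc
      = b.castSucc := by
  rw [pow_succ', Perm.mul_apply, insWP_pow_period, insWP_right_last]

lemma insWP_minimalPeriod_b :
    Function.minimalPeriod ⇑(insWP x g b).right b.castSucc
      = Function.minimalPeriod ⇑x.right b + 1 := by
  set r := Function.minimalPeriod ⇑x.right b with hr
  set p := Function.minimalPeriod ⇑(insWP x g b).right b.castSucc with hp
  have hple : p ≤ r + 1 :=
    Function.IsPeriodicPt.minimalPeriod_le (Nat.succ_pos r)
      (by show (⇑(insWP x g b).right)^[r+1] b.castSucc = b.castSucc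
          rw [Equiv.Perm.iterate_eq_pow]; exact insWP_pow_period_succ)
  have hppos : 0 < p := perm_minimalPeriod_pos _ _
  have hpp : ((insWP x g b).right ^ p) b.castSucc = b.castSucc :=
    perm_pow_minimalPeriod _ _
  rcases Nat.lt_or_ge p (r + 1) with hlt | hge
  · exfalso
    rcases Nat.lt_or_ge p r with hlt' | hge'
    · rw [insWP_pow_castSucc_b hlt'] at hpp
      exact perm_pow_ne_of_lt_minimalPeriod hppos hlt' (Fin.castSucc_inj.mp hpp)
    · have : p = r := le_antisymm (Nat.lt_succ_iff.mp hlt) hge'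
      rw [this, insWP_pow_period] at hpp
      exact (Fin.castSucc_lt_last b).ne' hpp
  · exact le_antisymm hple hge

lemma insWP_pow_invariant (j : Fin n) (m : ℕ) :
    (∃ m', ((insWP x g b).right ^ m) j.castSucc = ((x.right ^ m') j).castSucc)
    ∨ (((insWP x g b).right ^ m) j.castSucc = Fin.last n ∧ ∃ m', (x.right ^ m') j = b) := by
  induction m with
  | zero => exact Or.inl ⟨0, rfl⟩
  | succ m ih =>
    rcases ih with ⟨m', hm'⟩ | ⟨hl, m', hm'⟩
    · by_cases hb : x.right ((x.right ^ m') j) = b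
      · refine Or.inr ⟨?_, m' + 1, by rw [pow_succ', Perm.mul_apply, hb]⟩
        rw [pow_succ', Perm.mul_apply, hm', insWP_right_castSucc, if_pos hb]
      · refine Or.inl ⟨m' + 1, ?_⟩
        rw [pow_succ', Perm.mul_apply, hm', insWP_right_castSucc, if_neg hb, ← Perm.mul_apply,
          ← pow_succ']
    · refine Or.inl ⟨m', ?_⟩
      rw [pow_succ', Perm.mul_apply, hl, insWP_right_last, hm']

lemma insWP_pow_exists (j : Fin n) (m' : ℕ) :
    ∃ m, ((insWP x g b).right ^ m) j.castSucc = ((x.right ^ m') j).castSucc := by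
  induction m' with
  | zero => exact ⟨0, rfl⟩
  | succ m' ih =>
    obtain ⟨m, hm⟩ := ih
    by_cases hb : x.right ((x.right ^ m') j) = b
    · refine ⟨m + 2, ?_⟩
      have h1 : ((insWP x g b).right ^ (m + 1)) j.castSucc = Fin.last n := by
        rw [pow_succ', Perm.mul_apply, hm, insWP_right_castSucc, if_pos hb]
      rw [pow_succ', Perm.mul_apply, h1, insWP_right_last, pow_succ', Perm.mul_apply, hb]
    · refine ⟨m + 1, ?_⟩
      rw [pow_succ', Perm.mul_apply, hm, insWP_right_castSucc, if_neg hb, ← Perm.mul_apply,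
        ← pow_succ']

lemma insWP_minRep_iff (j : Fin n) :
    (∀ m : ℕ, j.castSucc ≤ ((insWP x g b).right ^ m) j.castSucc)
      ↔ (∀ m : ℕ, j ≤ (x.right ^ m) j) := by
  constructor
  · intro H m'
    obtain ⟨m, hm⟩ := insWP_pow_exists (x := x) (g := g) (b := b) j m'
    have := H m
    rw [hm] at this
    exact Fin.castSucc_le_castSucc_iff.mp this
  · intro H m
    rcases insWP_pow_invariant (x := x) (g := g) (b := b) j m with ⟨m', hm'⟩ | ⟨hl, _⟩
    · rw [hm']
      exact Fin.castSucc_le_castSucc_iff.mpr (H m')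
    · rw [hl]
      exact Fin.le_last _

lemma insWP_last_not_minRep :
    ¬ (∀ m : ℕ, Fin.last n ≤ ((insWP x g b).right ^ m) (Fin.last n)) := by
  intro H
  have := H 1
  rw [pow_one, insWP_right_last] at this
  exact absurd this (not_le.2 (Fin.castSucc_lt_last b))

lemma cycleProd_insWP_of_not {j : Fin n} (hb : ∀ m : ℕ, (x.right ^ m) j ≠ b) :
    cycleProd (insWP x g b) j.castSucc = cycleProd x j := by
  unfold cycleProd
  have hmp : Function.minimalPeriod ⇑(insWP x g b).right j.castSucc
      = Function.minimalPeriod ⇑x.right j :=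
    perm_minimalPeriod_congr fun m => by
      rw [insWP_pow_castSucc_of_not hb]; exact Fin.castSucc_inj
  rw [hmp]
  congr 1
  apply List.map_congr_left
  intro m _
  rw [insWP_pow_castSucc_of_not hb, insWP_left, Fin.snoc_castSucc,
    Function.update_of_ne (hb m)]

lemma cycleProd_insWP_b :
    cycleProd (insWP x g b) b.castSucc = g * cycleProd x b * g⁻¹ := by
  obtain ⟨r', hr'⟩ : ∃ r', Function.minimalPeriod ⇑x.right b = r' + 1 :=
    ⟨_, (Nat.succ_pred_eq_of_pos (perm_minimalPeriod_pos x.right b)).symm⟩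
  unfold cycleProd
  rw [insWP_minimalPeriod_b, List.range_succ, List.reverse_append, List.map_append,
    List.prod_append]
  have hR : ((insWP x g b).right ^ Function.minimalPeriod ⇑x.right b) b.castSucc
      = Fin.last n := insWP_pow_period
  simp only [List.reverse_singleton, List.map_cons, List.map_nil, List.prod_cons,
    List.prod_nil, hR]
  have hg : (insWP x g b).left (Fin.last n) = g := by simp
  rw [hg, hr', mul_one]
  have hmain : ((List.range (r' + 1)).reverse.map
        fun m => (insWP x g b).left (((insWP x g b).right ^ m) b.castSucc)).prod
      = ((List.range (r' + 1)).reverse.map fun m => x.left ((x.right ^ m) b)).prod * g⁻¹ := by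
    apply list_helper
    · simp only [pow_zero, Perm.one_apply, insWP_left, Fin.snoc_castSucc]
      rw [Function.update_self]
    · intro m hm
      have hlt : m + 1 < Function.minimalPeriod ⇑x.right b := by omega
      rw [insWP_pow_castSucc_b hlt, insWP_left, Fin.snoc_castSucc,
        Function.update_of_ne (perm_pow_ne_of_lt_minimalPeriod (Nat.succ_pos m) hlt)]
  rw [hmain, ← hr', mul_assoc]

lemma cycleCount_insWP {c : Set G} (hc : IsConjClass c) :
    cycleCount (insWP x g b) c = cycleCount x c := by
  classical
  rw [cycleCount_eq_sum, cycleCount_eq_sum, Fin.sum_univ_castSucc]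
  have hlast : (if (∀ m : ℕ, Fin.last n ≤ ((insWP x g b).right ^ m) (Fin.last n))
      ∧ cycleProd (insWP x g b) (Fin.last n) ∈ c then 1 else 0) = 0 :=
    if_neg (fun hh => insWP_last_not_minRep hh.1)
  rw [hlast, add_zero]
  refine Finset.sum_congr rfl fun j _ => ?_
  refine if_congr (and_congr (insWP_minRep_iff j) ?_) rfl rfl
  by_cases horb : ∃ m, (x.right ^ m) j = b
  · obtain ⟨m0, hm0⟩ := horb
    obtain ⟨m1, hm1⟩ := exists_pow_eq_of_pow_eq x.right hm0
    obtain ⟨m2, hm2⟩ := insWP_pow_exists (x := x) (g := g) (b := b) b m1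
    rw [hm1] at hm2
    have c1 : IsConj (cycleProd x b) (cycleProd x j) := hm1 ▸ isConj_cycleProd_pow x b m1
    have c2 : IsConj (cycleProd (insWP x g b) b.castSucc)
        (cycleProd (insWP x g b) j.castSucc) :=
      hm2 ▸ isConj_cycleProd_pow (insWP x g b) b.castSucc m2
    have c3 : IsConj (cycleProd x b) (cycleProd (insWP x g b) b.castSucc) := by
      rw [cycleProd_insWP_b]
      exact isConj_iff.2 ⟨g, rfl⟩
    exact hc.mem_iff (c2.symm.trans (c3.symm.trans c1))
  · push_neg at horb
    rw [cycleProd_insWP_of_not horb]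

end Ins

end WP

namespace WP

variable {G : Type*} [Group G] {n : ℕ}

lemma proj_left (y : WP G (n + 1)) (i : Fin n) :
    (proj y).left i = if y.right (Fin.last n) = i.castSucc
      then y.left i.castSucc * y.left (Fin.last n) else y.left i.castSucc := rfl

lemma proj_right (y : WP G (n + 1)) : (proj y).right = projPerm y.right := rfl

lemma projPerm_castSucc_of_ne {st : Perm (Fin (n + 1))} {i : Fin n}
    (h : st i.castSucc ≠ Fin.last n) : (projPerm st i).castSucc = st i.castSucc := by
  obtain ⟨j, hj⟩ := Fin.exists_castSucc_eq.mpr h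
  have he : (finSuccEquivLast.symm.trans (st.trans finSuccEquivLast)) (some i) = some j := by
    simp [Equiv.trans_apply, finSuccEquivLast_symm_some, ← hj, finSuccEquivLast_castSucc]
  have h2 := Equiv.removeNone_some _ ⟨j, he⟩
  rw [he] at h2
  have h4 : projPerm st i = j := Option.some_injective _ h2
  rw [h4, hj]

lemma projPerm_castSucc_of_eq {st : Perm (Fin (n + 1))} {i : Fin n}
    (h : st i.castSucc = Fin.last n) : (projPerm st i).castSucc = st (Fin.last n) := by
  have hne : st (Fin.last n) ≠ Fin.last n := fun hh =>
    (Fin.castSucc_lt_last i).ne (st.injective (h.trans hh.symm))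
  obtain ⟨j, hj⟩ := Fin.exists_castSucc_eq.mpr hne
  have he : (finSuccEquivLast.symm.trans (st.trans finSuccEquivLast)) (some i) = none := by
    simp [Equiv.trans_apply, finSuccEquivLast_symm_some, h, finSuccEquivLast_last]
  have h2 := Equiv.removeNone_none _ he
  have h3 : (finSuccEquivLast.symm.trans (st.trans finSuccEquivLast)) none = some j := by
    simp [Equiv.trans_apply, finSuccEquivLast_symm_none, ← hj, finSuccEquivLast_castSucc]
  rw [h3] at h2
  have h4 : projPerm st i = j := Option.some_injective _ h2
  rw [h4, hj]

lemma proj_extWP (x : WP G n) (g : G) : proj (extWP x g) = x := by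
  refine SemidirectProduct.ext ?_ ?_
  · funext i
    rw [proj_left, extWP_right, liftPerm_last, if_neg (Fin.castSucc_lt_last _).ne',
      extWP_left, Fin.snoc_castSucc]
  · refine Equiv.ext fun i => ?_
    rw [proj_right, extWP_right]
    apply Fin.castSucc_inj.mp
    rw [projPerm_castSucc_of_ne (by rw [liftPerm_castSucc]; exact (Fin.castSucc_lt_last _).ne),
      liftPerm_castSucc]

lemma proj_insWP (x : WP G n) (g : G) (b : Fin n) : proj (insWP x g b) = x := by
  refine SemidirectProduct.ext ?_ ?_
  · funext i
    rw [proj_left, insWP_right_last]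
    by_cases hib : i = b
    · subst hib
      rw [if_pos rfl, insWP_left, Fin.snoc_castSucc, Fin.snoc_last, Function.update_self,
        inv_mul_cancel_right]
    · rw [if_neg (fun hh => hib (Fin.castSucc_inj.mp hh.symm)), insWP_left, Fin.snoc_castSucc,
        Function.update_of_ne hib]
  · refine Equiv.ext fun i => ?_
    rw [proj_right]
    apply Fin.castSucc_inj.mp
    by_cases hib : x.right i = b
    · rw [projPerm_castSucc_of_eq (by rw [insWP_right_castSucc, if_pos hib]),
        insWP_right_last, hib]
    · have hne : (insWP x g b).right i.castSucc ≠ Fin.last n := by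
        rw [insWP_right_castSucc, if_neg hib]
        exact (Fin.castSucc_lt_last _).ne
      rw [projPerm_castSucc_of_ne hne, insWP_right_castSucc, if_neg hib]

lemma fiber_classify (x : WP G n) (y : WP G (n + 1)) (hy : proj y = x) :
    (∃ g, y = extWP x g) ∨ (∃ g b, y = insWP x g b) := by
  subst hy
  by_cases hl : y.right (Fin.last n) = Fin.last n
  · left
    refine ⟨y.left (Fin.last n), SemidirectProduct.ext ?_ ?_⟩
    · funext i
      induction i using Fin.lastCases with
      | last => rw [extWP_left, Fin.snoc_last]
      | cast j =>
        rw [extWP_left, Fin.snoc_castSucc, proj_left, if_neg]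
        rw [hl]
        exact (Fin.castSucc_lt_last _).ne'
    · refine Equiv.ext fun i => ?_
      rw [extWP_right, proj_right]
      induction i using Fin.lastCases with
      | last => rw [liftPerm_last, hl]
      | cast j =>
        have hne : y.right j.castSucc ≠ Fin.last n := fun hh =>
          (Fin.castSucc_lt_last j).ne (y.right.injective (hh.trans hl.symm))
        rw [liftPerm_castSucc, projPerm_castSucc_of_ne hne]
  · right
    obtain ⟨b, hb⟩ := Fin.exists_castSucc_eq.mpr hl
    refine ⟨y.left (Fin.last n), b, SemidirectProduct.ext ?_ ?_⟩
    · funext i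
      induction i using Fin.lastCases with
      | last => rw [insWP_left, Fin.snoc_last]
      | cast j =>
        rw [insWP_left, Fin.snoc_castSucc]
        by_cases hjb : j = b
        · subst hjb
          rw [Function.update_self, proj_left, if_pos hb.symm, mul_inv_cancel_right]
        · rw [Function.update_of_ne hjb, proj_left,
            if_neg (fun hh => hjb (Fin.castSucc_inj.mp (hb.trans hh)).symm)]
    · refine Equiv.ext fun i => ?_
      rw [insWP_right, proj_right]
      induction i using Fin.lastCases with
      | last =>
        rw [Perm.mul_apply, liftPerm_last, Equiv.swap_apply_right, hb]
      | cast j =>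
        rw [Perm.mul_apply, liftPerm_castSucc]
        by_cases hc : y.right j.castSucc = Fin.last n
        · rw [projPerm_castSucc_of_eq hc, ← hb, Equiv.swap_apply_left, hc]
        · rw [projPerm_castSucc_of_ne hc,
            Equiv.swap_apply_of_ne_of_ne (fun hh => (Fin.castSucc_lt_last j).ne
              (y.right.injective (hh.trans hb))) hc]

lemma extWP_left_last (x : WP G n) (g : G) : (extWP x g).left (Fin.last n) = g := by simp
lemma insWP_left_last (x : WP G n) (g : G) (b : Fin n) :
    (insWP x g b).left (Fin.last n) = g := by simp

/-- Parametrization of the fiber of `proj` over `x`. -/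
def fiberMap (x : WP G n) : G × Option (Fin n) → WP G (n + 1) :=
  fun p => Option.rec (extWP x p.1) (fun b => insWP x p.1 b) p.2

@[simp] lemma fiberMap_none (x : WP G n) (g : G) : fiberMap x (g, none) = extWP x g := rfl
@[simp] lemma fiberMap_some (x : WP G n) (g : G) (b : Fin n) :
    fiberMap x (g, some b) = insWP x g b := rfl

lemma fiberMap_right_last_none (x : WP G n) (g : G) :
    (fiberMap x (g, none)).right (Fin.last n) = Fin.last n := by
  simp

lemma fiberMap_right_last_some (x : WP G n) (g : G) (b : Fin n) :
    (fiberMap x (g, some b)).right (Fin.last n) = b.castSucc := by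
  rw [fiberMap_some, insWP_right_last]

lemma fiberMap_injective (x : WP G n) : Function.Injective (fiberMap x) := by
  rintro ⟨g1, o1⟩ ⟨g2, o2⟩ h
  have hg : g1 = g2 := by
    have h1 := congrArg (fun z => z.left (Fin.last n)) h
    cases o1 <;> cases o2 <;> simpa [extWP_left_last, insWP_left_last] using h1
  subst hg
  have hr : (fiberMap x (g1, o1)).right (Fin.last n)
      = (fiberMap x (g1, o2)).right (Fin.last n) := by rw [h]
  cases o1 with
  | none =>
    cases o2 with
    | none => rfl
    | some b2 =>
      exfalso
      rw [fiberMap_right_last_none, fiberMap_right_last_some] at hr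
      exact (Fin.castSucc_lt_last b2).ne hr.symm
  | some b1 =>
    cases o2 with
    | none =>
      exfalso
      rw [fiberMap_right_last_none, fiberMap_right_last_some] at hr
      exact (Fin.castSucc_lt_last b1).ne hr
    | some b2 =>
      rw [fiberMap_right_last_some, fiberMap_right_last_some] at hr
      rw [Fin.castSucc_inj.mp hr]

lemma fiber_eq_image [Fintype G] [DecidableEq G] (x : WP G n) :
    Finset.univ.filter (fun y : WP G (n + 1) => proj y = x)
      = Finset.univ.image (fiberMap x) := by
  ext y
  simp only [Finset.mem_filter, Finset.mem_image, Finset.mem_univ, true_and]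
  constructor
  · intro hy
    rcases fiber_classify x y hy with ⟨g, rfl⟩ | ⟨g, b, rfl⟩
    · exact ⟨(g, none), rfl⟩
    · exact ⟨(g, some b), rfl⟩
  · rintro ⟨⟨g, o⟩, rfl⟩
    cases o with
    | none => exact proj_extWP x g
    | some b => exact proj_insWP x g b

end WP

end WreathPaper

namespace WreathPaper

open WP in
/-- Summation of the cycle-count monomial over the fiber of the canonical projection:
`Σ_{x̃ : p_{n,n+1}(x̃) = x} ∏ t_l^{[x̃]_{c_l}} = (|G|·n + Σ_l |c_l| t_l) ∏ t_l^{[x]_{c_l}}`. -/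
theorem fiber_sum_monomial {G : Type*} [Group G] [Fintype G] [DecidableEq G] {n k : ℕ}
    (c : Fin k → Set G) (hconj : ∀ l, IsConjClass (c l))
    (hpart : ∀ g : G, ∃! l, g ∈ c l) (x : WP G n) (t : Fin k → ℝ) :
    (∑ y ∈ Finset.univ.filter (fun y : WP G (n + 1) => proj y = x),
        ∏ l, t l ^ cycleCount y (c l))
      = ((Fintype.card G : ℝ) * n + ∑ l, (Nat.card (c l) : ℝ) * t l)
          * ∏ l, t l ^ cycleCount x (c l) := by
  classical
  set M : ℝ := ∏ l, t l ^ cycleCount x (c l) with hM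
  rw [fiber_eq_image, Finset.sum_image (fun p _ q _ h => fiberMap_injective x h),
    Fintype.sum_prod_type]
  have hext : ∀ g : G, (∏ l, t l ^ cycleCount (extWP x g) (c l))
      = (∏ l, if g ∈ c l then t l else 1) * M := by
    intro g
    rw [hM, ← Finset.prod_mul_distrib]
    refine Finset.prod_congr rfl fun l _ => ?_
    rw [cycleCount_extWP, pow_add, mul_comm]
    congr 1
    split_ifs <;> simp
  have hins : ∀ (g : G) (b : Fin n), (∏ l, t l ^ cycleCount (insWP x g b) (c l)) = M := by
    intro g b
    exact Finset.prod_congr rfl fun l _ => by rw [cycleCount_insWP (hconj l)]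
  have hopt : ∀ g : G, (∑ o : Option (Fin n), ∏ l, t l ^ cycleCount (fiberMap x (g, o)) (c l))
      = (∏ l, if g ∈ c l then t l else 1) * M + (n : ℝ) * M := by
    intro g
    rw [univ_option (Fin n), Finset.sum_insertNone]
    simp only [fiberMap_none, fiberMap_some]
    rw [hext]
    congr 1
    rw [Finset.sum_congr rfl (fun b _ => hins g b), Finset.sum_const, Finset.card_univ,
      Fintype.card_fin, nsmul_eq_mul]
  rw [Finset.sum_congr rfl (fun g _ => hopt g), Finset.sum_add_distrib, ← Finset.sum_mul,
    Finset.sum_const, Finset.card_univ, nsmul_eq_mul]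
  have hS : ∀ g : G, (∏ l, if g ∈ c l then t l else 1) = ∑ l, if g ∈ c l then t l else 0 := by
    intro g
    obtain ⟨l0, hl0, hu⟩ := hpart g
    rw [Finset.prod_eq_single l0 (fun l _ hl => if_neg (fun hmem => hl (hu l hmem)))
        (fun hl => absurd (Finset.mem_univ l0) hl),
      Finset.sum_eq_single l0 (fun l _ hl => if_neg (fun hmem => hl (hu l hmem)))
        (fun hl => absurd (Finset.mem_univ l0) hl)]
    rw [if_pos hl0, if_pos hl0]
  have hcard : ∀ l, (∑ g : G, if g ∈ c l then t l else 0) = (Nat.card (c l) : ℝ) * t l := by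
    intro l
    rw [← Finset.sum_filter, Finset.sum_const, nsmul_eq_mul]
    congr 2
    rw [Nat.card_eq_fintype_card, Fintype.card_subtype]
  rw [Finset.sum_congr rfl (fun g _ => hS g), Finset.sum_comm,
    Finset.sum_congr rfl (fun l _ => hcard l)]
  ring

end WreathPaper
end

section
/- Fix x ∈ G≀S(n), l ∈ {1,…,k}, and an integer L ≥ 1. (i) If L ≥ 2, then the number of y ∈ G≀S(n+1) such that p_{n,n+1}(y) = x and y has exactly one more cycle of length L and type c_l than x, exactly one fewer cycle of length L−1 and type c_l than x, and for every other pair (length, type) the same number of cycles as x, equals |G|·(L−1)·r, where r is the number of cycles of x of length L−1 and type c_l. (ii) If L = 1, the number of y ∈ G≀S(n+1) with p_{n,n+1}(y) = x having exactly one more cycle of length 1 and type c_l than x, and the same number of cycles as x for every other pair (length, type), equals |c_l|. -/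
namespace WreathPaper

/-! ### Auxiliary development -/

namespace WP

open Equiv Function

variable {G : Type*} [Group G] {n : ℕ}

/-- extending a permutation of `Fin n` to `Fin (n+1)` fixing the last element -/
def extLast (s : Equiv.Perm (Fin n)) : Equiv.Perm (Fin (n + 1)) :=
  finSuccEquivLast.symm.permCongr s.optionCongr

@[simp] lemma extLast_castSucc (s : Equiv.Perm (Fin n)) (i : Fin n) :
    extLast s i.castSucc = (s i).castSucc := by
  simp [extLast, Equiv.permCongr_apply]

@[simp] lemma extLast_last (s : Equiv.Perm (Fin n)) :
    extLast s (Fin.last n) = Fin.last n := by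
  simp [extLast, Equiv.permCongr_apply]

/-- inserting the last point into the cycle of `a` (after `a`), or nowhere -/
def ins (s : Equiv.Perm (Fin n)) (o : Option (Fin n)) : Equiv.Perm (Fin (n + 1)) :=
  extLast s * o.elim 1 (fun a => Equiv.swap a.castSucc (Fin.last n))

@[simp] lemma ins_none_castSucc (s : Equiv.Perm (Fin n)) (i : Fin n) :
    ins s none i.castSucc = (s i).castSucc := by
  simp [ins]

@[simp] lemma ins_none_last (s : Equiv.Perm (Fin n)) :
    ins s none (Fin.last n) = Fin.last n := by
  simp [ins]

lemma ins_some_castSucc (s : Equiv.Perm (Fin n)) (a i : Fin n) :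
    ins s (some a) i.castSucc = if i = a then Fin.last n else (s i).castSucc := by
  rcases eq_or_ne i a with rfl | h
  · simp [ins]
  · rw [ins, Equiv.Perm.mul_apply, Option.elim, Equiv.swap_apply_of_ne_of_ne
      (by simpa using h) (Fin.castSucc_lt_last i).ne]
    simp [h]

lemma ins_some_castSucc_of_ne (s : Equiv.Perm (Fin n)) {a i : Fin n} (h : i ≠ a) :
    ins s (some a) i.castSucc = (s i).castSucc := by
  simp [ins_some_castSucc, h]

@[simp] lemma ins_some_castSucc_self (s : Equiv.Perm (Fin n)) (a : Fin n) :
    ins s (some a) a.castSucc = Fin.last n := by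
  simp [ins_some_castSucc]

@[simp] lemma ins_some_last (s : Equiv.Perm (Fin n)) (a : Fin n) :
    ins s (some a) (Fin.last n) = (s a).castSucc := by
  simp [ins, Equiv.Perm.mul_apply, Equiv.swap_apply_right]

lemma projPerm_apply {t : Equiv.Perm (Fin (n + 1))} {i j : Fin n}
    (h : t i.castSucc = j.castSucc) : projPerm t i = j := by
  have h2 : (finSuccEquivLast.symm.trans (t.trans finSuccEquivLast)) (some i) = some j := by
    simp [h]
  apply Option.some_injective
  rw [projPerm, Equiv.removeNone_some _ ⟨j, h2⟩, h2]

lemma projPerm_apply' {t : Equiv.Perm (Fin (n + 1))} {i j : Fin n}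
    (h1 : t i.castSucc = Fin.last n) (h2 : t (Fin.last n) = j.castSucc) :
    projPerm t i = j := by
  have e1 : (finSuccEquivLast.symm.trans (t.trans finSuccEquivLast)) (some i) = none := by
    simp [h1]
  have e2 : (finSuccEquivLast.symm.trans (t.trans finSuccEquivLast)) none = some j := by
    simp [h2]
  apply Option.some_injective
  rw [projPerm, Equiv.removeNone_none _ e1, e2]

@[simp] lemma projPerm_ins (s : Equiv.Perm (Fin n)) (o : Option (Fin n)) :
    projPerm (ins s o) = s := by
  ext i
  cases o with
  | none => exact congrArg _ (projPerm_apply (ins_none_castSucc s i))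
  | some b =>
    rcases eq_or_ne i b with rfl | h
    · exact congrArg _ (projPerm_apply' (ins_some_castSucc_self s i) (ins_some_last s i))
    · exact congrArg _ (projPerm_apply (ins_some_castSucc_of_ne s h))


lemma eq_cs_of_ne_last {w : Fin (n + 1)} (h : w ≠ Fin.last n) :
    ∃ j : Fin n, w = j.castSucc :=
  (Fin.eq_castSucc_or_eq_last w).resolve_right h

/-! ### The fiber construction -/

section Fiber

variable (x : WP G n)

/-- the element of the fiber of `proj` over `x` determined by `g` (the entry at the
last place) and the insertion datum `o`. -/
def mkFib (g : G) (o : Option (Fin n)) : WP G (n + 1) :=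
  ⟨fun w => Fin.lastCases g
      (fun i => if o.map (⇑x.right) = some i then x.left i * g⁻¹ else x.left i) w,
    ins x.right o⟩

@[simp] lemma mkFib_right (g : G) (o : Option (Fin n)) :
    (mkFib x g o).right = ins x.right o := rfl

@[simp] lemma mkFib_left_last (g : G) (o : Option (Fin n)) :
    (mkFib x g o).left (Fin.last n) = g := by
  simp [mkFib]

lemma mkFib_left_castSucc (g : G) (o : Option (Fin n)) (i : Fin n) :
    (mkFib x g o).left i.castSucc =
      if o.map (⇑x.right) = some i then x.left i * g⁻¹ else x.left i := by
  simp [mkFib]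

lemma mkFib_left_castSucc_none (g : G) (i : Fin n) :
    (mkFib x g none).left i.castSucc = x.left i := by
  simp [mkFib]

lemma mkFib_left_castSucc_some (g : G) (a i : Fin n) (h : i ≠ x.right a) :
    (mkFib x g (some a)).left i.castSucc = x.left i := by
  rw [mkFib_left_castSucc, if_neg (fun hc => h (Option.some_injective _ (by simpa using hc)).symm)]

lemma mkFib_left_castSucc_some_self (g : G) (a : Fin n) :
    (mkFib x g (some a)).left (x.right a).castSucc = x.left (x.right a) * g⁻¹ := by
  simp [mkFib_left_castSucc]

lemma proj_mkFib (g : G) (o : Option (Fin n)) : proj (mkFib x g o) = x := by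
  have hr : (proj (mkFib x g o)).right = x.right := by
    simp [proj]
  have hl : (proj (mkFib x g o)).left = x.left := by
    funext i
    show (if (mkFib x g o).right (Fin.last n) = Fin.castSucc i then _ else _) = _
    cases o with
    | none =>
      rw [if_neg (by simp [(Fin.castSucc_lt_last i).ne'])]
      exact mkFib_left_castSucc_none x g i
    | some a =>
      rcases eq_or_ne i (x.right a) with rfl | h
      · rw [if_pos (by simp), mkFib_left_castSucc_some_self, mkFib_left_last]
        simp
      · rw [if_neg (by simpa using (Ne.symm h)),
          mkFib_left_castSucc_some x g a i h]
  exact SemidirectProduct.ext hl hr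

lemma mkFib_injective : Function.Injective
    (fun p : G × Option (Fin n) => mkFib x p.1 p.2) := by
  rintro ⟨g, o⟩ ⟨g', o'⟩ h
  have hg : g = g' := by
    have := congrArg (fun y : WP G (n+1) => y.left (Fin.last n)) h
    simpa using this
  have hright := congrArg (fun y : WP G (n+1) => y.right (Fin.last n)) h
  have hsymm := congrArg (fun y : WP G (n+1) => y.right.symm (Fin.last n)) h
  simp only [mkFib_right] at hright hsymm
  cases o with
  | none => cases o' with
    | none => simp [hg]
    | some a' =>
      rw [ins_none_last, ins_some_last] at hright
      exact absurd hright.symm (Fin.castSucc_lt_last _).ne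
  | some a => cases o' with
    | none =>
      rw [ins_none_last, ins_some_last] at hright
      exact absurd hright (Fin.castSucc_lt_last _).ne
    | some a' =>
      have e1 : (ins x.right (some a)).symm (Fin.last n) = a.castSucc := by
        apply (ins x.right (some a)).injective; simp
      have e2 : (ins x.right (some a')).symm (Fin.last n) = a'.castSucc := by
        apply (ins x.right (some a')).injective; simp
      rw [e1, e2] at hsymm
      have : a = a' := Fin.castSucc_injective n hsymm
      simp [hg, this]

lemma exists_mkFib {y : WP G (n + 1)} (h : proj y = x) :
    ∃ g o, y = mkFib x g o := by
  have hxr : x.right = projPerm y.right := by rw [← h]; rfl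
  have hxl : ∀ i : Fin n, x.left i =
      (if y.right (Fin.last n) = Fin.castSucc i
        then y.left (Fin.castSucc i) * y.left (Fin.last n)
        else y.left (Fin.castSucc i)) := by
    intro i; rw [← h]; rfl
  refine ⟨y.left (Fin.last n), ?_⟩
  by_cases hfix : y.right (Fin.last n) = Fin.last n
  · refine ⟨none, ?_⟩
    have hr : y.right = ins x.right none := by
      ext w
      induction w using Fin.lastCases with
      | last => simp [hfix]
      | cast i =>
        have hne : y.right i.castSucc ≠ Fin.last n := fun hc => by
          have := y.right.injective (hc.trans hfix.symm)
          exact (Fin.castSucc_lt_last i).ne this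
        obtain ⟨j, hj⟩ := eq_cs_of_ne_last hne
        rw [hj, ins_none_castSucc, hxr, projPerm_apply hj]
    have hl : y.left = (mkFib x (y.left (Fin.last n)) none).left := by
      funext w
      induction w using Fin.lastCases with
      | last => simp
      | cast i =>
        rw [mkFib_left_castSucc_none, hxl i, if_neg (by rw [hfix]; exact (Fin.castSucc_lt_last i).ne')]
    exact SemidirectProduct.ext hl (by rw [hr]; rfl)
  · obtain ⟨b, hb⟩ := eq_cs_of_ne_last hfix
    have hsne : y.right.symm (Fin.last n) ≠ Fin.last n := fun hc => by
      have h2 := congrArg y.right hc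
      rw [y.right.apply_symm_apply] at h2
      exact hfix h2.symm
    obtain ⟨a, ha⟩ := eq_cs_of_ne_last hsne
    have haa : y.right a.castSucc = Fin.last n := by
      rw [← ha, y.right.apply_symm_apply]
    have hsab : x.right a = b := by rw [hxr]; exact projPerm_apply' haa hb
    refine ⟨some a, ?_⟩
    have hr : y.right = ins x.right (some a) := by
      ext w
      induction w using Fin.lastCases with
      | last => rw [ins_some_last, hsab, hb]
      | cast i =>
        rcases eq_or_ne i a with rfl | hia
        · rw [haa, ins_some_castSucc_self]
        · have hne : y.right i.castSucc ≠ Fin.last n := fun hc => by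
            apply hia
            have : i.castSucc = y.right.symm (Fin.last n) := by
              rw [← hc, y.right.symm_apply_apply]
            rw [ha] at this
            exact Fin.castSucc_injective n this
          obtain ⟨j, hj⟩ := eq_cs_of_ne_last hne
          rw [hj, ins_some_castSucc_of_ne _ hia, hxr, projPerm_apply hj]
    have hl : y.left = (mkFib x (y.left (Fin.last n)) (some a)).left := by
      funext w
      induction w using Fin.lastCases with
      | last => simp
      | cast i =>
        rcases eq_or_ne i (x.right a) with rfl | hib
        · rw [mkFib_left_castSucc_some_self, hxl (x.right a),
            if_pos (by rw [hb, hsab]), mul_inv_cancel_right]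
        · rw [mkFib_left_castSucc_some x _ a i hib, hxl i,
            if_neg (by rw [hb]; exact fun hc => hib (((Fin.castSucc_injective n hc) ▸ hsab).symm))]
    exact SemidirectProduct.ext hl (by rw [hr]; rfl)

end Fiber


/-! ### Orbit and period lemmas -/

section Orbits

open Function

lemma perm_mem_periodicPts {m : ℕ} (u : Equiv.Perm (Fin m)) (b : Fin m) :
    b ∈ periodicPts ⇑u :=
  ⟨orderOf u, orderOf_pos u, by
    show (⇑u)^[orderOf u] b = b
    rw [Equiv.Perm.iterate_eq_pow, pow_orderOf_eq_one]; rfl⟩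

lemma perm_minPeriod_pos {m : ℕ} (u : Equiv.Perm (Fin m)) (b : Fin m) :
    0 < Function.minimalPeriod ⇑u b :=
  Function.minimalPeriod_pos_of_mem_periodicPts (perm_mem_periodicPts u b)

lemma perm_pow_minPeriod {m : ℕ} (u : Equiv.Perm (Fin m)) (b : Fin m) :
    (u ^ Function.minimalPeriod ⇑u b) b = b := by
  rw [← Equiv.Perm.iterate_eq_pow]
  exact Function.iterate_minimalPeriod

lemma cyc_symm (s : Equiv.Perm (Fin n)) {i a : Fin n} :
    (∃ q : ℕ, (s ^ q) i = a) → ∃ q : ℕ, (s ^ q) a = i := by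
  rintro ⟨q, rfl⟩
  obtain ⟨d, hd⟩ : ∃ d, orderOf s = d + 1 :=
    ⟨orderOf s - 1, by have := orderOf_pos s; omega⟩
  refine ⟨q * d, ?_⟩
  rw [← Equiv.Perm.mul_apply, ← pow_add]
  have h2 : q * d + q = orderOf s * q := by rw [hd]; ring
  rw [h2, pow_mul, pow_orderOf_eq_one, one_pow]; rfl

lemma extLast_pow_castSucc (s : Equiv.Perm (Fin n)) (i : Fin n) (m : ℕ) :
    ((extLast s) ^ m) i.castSucc = ((s ^ m) i).castSucc := by
  induction m with
  | zero => simp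
  | succ m ih =>
    rw [pow_succ', Equiv.Perm.mul_apply, ih, extLast_castSucc, pow_succ',
      Equiv.Perm.mul_apply]

lemma extLast_pow_last (s : Equiv.Perm (Fin n)) (m : ℕ) :
    ((extLast s) ^ m) (Fin.last n) = Fin.last n := by
  induction m with
  | zero => simp
  | succ m ih => rw [pow_succ', Equiv.Perm.mul_apply, ih, extLast_last]

lemma ins_none_eq (s : Equiv.Perm (Fin n)) : ins s none = extLast s := by
  simp [ins]

lemma ins_pow_castSucc_of_notcyc (s : Equiv.Perm (Fin n)) {a i : Fin n}
    (h : ∀ q : ℕ, (s ^ q) i ≠ a) (m : ℕ) :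
    ((ins s (some a)) ^ m) i.castSucc = ((s ^ m) i).castSucc := by
  induction m with
  | zero => simp
  | succ m ih =>
    rw [pow_succ', Equiv.Perm.mul_apply, ih, ins_some_castSucc_of_ne s (h m),
      pow_succ', Equiv.Perm.mul_apply]

lemma exists_ins_pow_eq (s : Equiv.Perm (Fin n)) (a i : Fin n) (m : ℕ) :
    ∃ m' : ℕ, ((ins s (some a)) ^ m') i.castSucc = ((s ^ m) i).castSucc := by
  induction m with
  | zero => exact ⟨0, by simp⟩
  | succ m ih =>
    obtain ⟨m', hm'⟩ := ih
    by_cases h : (s ^ m) i = a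
    · refine ⟨m' + 2, ?_⟩
      have e1 : ((ins s (some a)) ^ (m' + 1)) i.castSucc = Fin.last n := by
        rw [pow_succ', Equiv.Perm.mul_apply, hm', h, ins_some_castSucc_self]
      rw [show m' + 2 = (m' + 1) + 1 by rfl, pow_succ', Equiv.Perm.mul_apply, e1,
        ins_some_last, pow_succ', Equiv.Perm.mul_apply, h]
    · exact ⟨m' + 1, by
        rw [pow_succ', Equiv.Perm.mul_apply, hm', ins_some_castSucc_of_ne s h,
          pow_succ', Equiv.Perm.mul_apply]⟩

lemma ins_pow_castSucc_cases (s : Equiv.Perm (Fin n)) (a i : Fin n) (m : ℕ) :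
    (∃ q : ℕ, ((ins s (some a)) ^ m) i.castSucc = ((s ^ q) i).castSucc) ∨
    (((ins s (some a)) ^ m) i.castSucc = Fin.last n ∧ ∃ q : ℕ, (s ^ q) i = a) := by
  induction m with
  | zero => exact Or.inl ⟨0, by simp⟩
  | succ m ih =>
    rcases ih with ⟨q, hq⟩ | ⟨hlast, q, hq⟩
    · by_cases h : (s ^ q) i = a
      · exact Or.inr ⟨by rw [pow_succ', Equiv.Perm.mul_apply, hq, h,
          ins_some_castSucc_self], q, h⟩
      · exact Or.inl ⟨q + 1, by rw [pow_succ', Equiv.Perm.mul_apply, hq,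
          ins_some_castSucc_of_ne s h, pow_succ', Equiv.Perm.mul_apply]⟩
    · refine Or.inl ⟨q + 1, ?_⟩
      rw [pow_succ', Equiv.Perm.mul_apply, hlast, ins_some_last, pow_succ',
        Equiv.Perm.mul_apply, hq]

lemma mr_ins_iff (s : Equiv.Perm (Fin n)) (a i : Fin n) :
    (∀ m : ℕ, i.castSucc ≤ ((ins s (some a)) ^ m) i.castSucc) ↔
      (∀ m : ℕ, i ≤ (s ^ m) i) := by
  constructor
  · intro h m
    obtain ⟨m', hm'⟩ := exists_ins_pow_eq s a i m
    have := h m'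
    rw [hm'] at this
    exact Fin.castSucc_le_castSucc_iff.mp this
  · intro h m
    rcases ins_pow_castSucc_cases s a i m with ⟨q, hq⟩ | ⟨hlast, _⟩
    · rw [hq]; exact Fin.castSucc_le_castSucc_iff.mpr (h q)
    · rw [hlast]; exact Fin.le_last _

lemma mr_extLast_iff (s : Equiv.Perm (Fin n)) (i : Fin n) :
    (∀ m : ℕ, i.castSucc ≤ ((extLast s) ^ m) i.castSucc) ↔
      (∀ m : ℕ, i ≤ (s ^ m) i) := by
  constructor
  · intro h m
    have := h m
    rw [extLast_pow_castSucc] at this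
    exact Fin.castSucc_le_castSucc_iff.mp this
  · intro h m
    rw [extLast_pow_castSucc]
    exact Fin.castSucc_le_castSucc_iff.mpr (h m)

lemma not_mr_ins_last (s : Equiv.Perm (Fin n)) (a : Fin n) :
    ¬ (∀ m : ℕ, Fin.last n ≤ ((ins s (some a)) ^ m) (Fin.last n)) := by
  intro h
  have := h 1
  rw [pow_one, ins_some_last] at this
  exact absurd this (Fin.castSucc_lt_last _).not_ge

lemma minimalPeriod_of_pow_eq {t : Equiv.Perm (Fin (n + 1))} {s : Equiv.Perm (Fin n)}
    {i : Fin n} (hf : ∀ m : ℕ, (t ^ m) i.castSucc = ((s ^ m) i).castSucc) :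
    minimalPeriod ⇑t i.castSucc = minimalPeriod ⇑s i := by
  apply le_antisymm
  · apply IsPeriodicPt.minimalPeriod_le (perm_minPeriod_pos s i)
    show (⇑t)^[minimalPeriod ⇑s i] i.castSucc = i.castSucc
    rw [Equiv.Perm.iterate_eq_pow, hf, perm_pow_minPeriod]
  · apply IsPeriodicPt.minimalPeriod_le (perm_minPeriod_pos t i.castSucc)
    show (⇑s)^[minimalPeriod ⇑t i.castSucc] i = i
    apply Fin.castSucc_injective n
    rw [Equiv.Perm.iterate_eq_pow, ← hf, perm_pow_minPeriod]

lemma minPeriod_ins_notcyc (s : Equiv.Perm (Fin n)) {a i : Fin n}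
    (h : ∀ q : ℕ, (s ^ q) i ≠ a) :
    minimalPeriod ⇑(ins s (some a)) i.castSucc = minimalPeriod ⇑s i :=
  minimalPeriod_of_pow_eq (ins_pow_castSucc_of_notcyc s h)

lemma minPeriod_extLast (s : Equiv.Perm (Fin n)) (i : Fin n) :
    minimalPeriod ⇑(extLast s) i.castSucc = minimalPeriod ⇑s i :=
  minimalPeriod_of_pow_eq (extLast_pow_castSucc s i)

lemma minPeriod_extLast_last (s : Equiv.Perm (Fin n)) :
    minimalPeriod ⇑(extLast s) (Fin.last n) = 1 := by
  exact Function.minimalPeriod_eq_one_iff_isFixedPt.mpr (extLast_last s)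

lemma ins_pow_last (s : Equiv.Perm (Fin n)) (a : Fin n) {m : ℕ} (h1 : 1 ≤ m)
    (h2 : m ≤ minimalPeriod ⇑s a) :
    ((ins s (some a)) ^ m) (Fin.last n) = ((s ^ m) a).castSucc := by
  induction m with
  | zero => omega
  | succ m ih =>
    rcases Nat.eq_or_lt_of_le h1 with h0 | hlt
    · rw [← h0, pow_one, pow_one, ins_some_last]
    · have hm1 : 1 ≤ m := by omega
      have hm2 : m ≤ minimalPeriod ⇑s a := by omega
      have hne : (s ^ m) a ≠ a := by
        intro hc
        have : IsPeriodicPt ⇑s m a := by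
          show (⇑s)^[m] a = a
          rw [Equiv.Perm.iterate_eq_pow]; exact hc
        exact Function.not_isPeriodicPt_of_pos_of_lt_minimalPeriod
          (by omega) (by omega) this
      rw [pow_succ', Equiv.Perm.mul_apply, ih hm1 hm2, ins_some_castSucc_of_ne s hne,
        pow_succ', Equiv.Perm.mul_apply]

lemma minPeriod_ins_last (s : Equiv.Perm (Fin n)) (a : Fin n) :
    minimalPeriod ⇑(ins s (some a)) (Fin.last n) = minimalPeriod ⇑s a + 1 := by
  set r := minimalPeriod ⇑s a with hr
  have hrpos : 0 < r := perm_minPeriod_pos s a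
  have hper : IsPeriodicPt ⇑(ins s (some a)) (r + 1) (Fin.last n) := by
    show (⇑(ins s (some a)))^[r + 1] (Fin.last n) = Fin.last n
    rw [Equiv.Perm.iterate_eq_pow, pow_succ', Equiv.Perm.mul_apply,
      ins_pow_last s a hrpos le_rfl, hr, perm_pow_minPeriod, ins_some_castSucc_self]
  have hle : minimalPeriod ⇑(ins s (some a)) (Fin.last n) ≤ r + 1 :=
    hper.minimalPeriod_le (by omega)
  have hpos : 0 < minimalPeriod ⇑(ins s (some a)) (Fin.last n) :=
    perm_minPeriod_pos _ _
  set p := minimalPeriod ⇑(ins s (some a)) (Fin.last n) with hp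
  by_contra hne
  have hple : p ≤ r := by omega
  have : ((ins s (some a)) ^ p) (Fin.last n) = Fin.last n := perm_pow_minPeriod _ _
  rw [ins_pow_last s a hpos hple] at this
  exact (Fin.castSucc_lt_last _).ne this

lemma minPeriod_ins_cyc (s : Equiv.Perm (Fin n)) {a i : Fin n}
    (h : ∃ q : ℕ, (s ^ q) i = a) :
    minimalPeriod ⇑(ins s (some a)) i.castSucc = minimalPeriod ⇑s i + 1 := by
  obtain ⟨q, hq⟩ := h
  have h1 : minimalPeriod ⇑s a = minimalPeriod ⇑s i := by
    have := minimalPeriod_apply_iterate (perm_mem_periodicPts s i) q (f := ⇑s)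
    rw [Equiv.Perm.iterate_eq_pow, hq] at this
    exact this
  obtain ⟨u, hu⟩ := exists_ins_pow_eq s a i q
  rw [hq] at hu
  have hlast : ((ins s (some a)) ^ (u + 1)) i.castSucc = Fin.last n := by
    rw [pow_succ', Equiv.Perm.mul_apply, hu, ins_some_castSucc_self]
  have h2 := minimalPeriod_apply_iterate
    (perm_mem_periodicPts (ins s (some a)) i.castSucc) (u + 1)
    (f := ⇑(ins s (some a)))
  rw [Equiv.Perm.iterate_eq_pow, hlast, minPeriod_ins_last] at h2
  rw [← h2, h1]

end Orbits


/-! ### Cycle product lemmas -/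

section Prods

open Function

lemma prod_range_reverse_bot (f : ℕ → G) (m : ℕ) :
    (((List.range (m + 1)).reverse).map f).prod =
      (((List.range m).reverse).map (f ∘ Nat.succ)).prod * f 0 := by
  rw [List.range_succ_eq_map]
  simp [List.map_reverse, List.map_map]

lemma prod_range_reverse_top (f : ℕ → G) (m : ℕ) :
    (((List.range (m + 1)).reverse).map f).prod =
      f m * (((List.range m).reverse).map f).prod := by
  rw [List.range_succ]
  simp [List.map_reverse]

lemma shift_cyc {s : Equiv.Perm (Fin n)} {i a : Fin n} {j : ℕ}
    (e : (s ^ j) i = s a) : ∃ q : ℕ, (s ^ q) i = a := by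
  refine ⟨orderOf s - 1 + j, ?_⟩
  rw [pow_add, Equiv.Perm.mul_apply, e, ← Equiv.Perm.mul_apply, ← pow_succ,
    Nat.sub_add_cancel (orderOf_pos s), pow_orderOf_eq_one]
  rfl

variable (x : WP G n)

lemma cycleProd_mkFib_none_castSucc (g : G) (i : Fin n) :
    cycleProd (mkFib x g none) i.castSucc = cycleProd x i := by
  unfold cycleProd
  simp only [mkFib_right, ins_none_eq, minPeriod_extLast]
  refine congrArg List.prod (List.map_congr_left fun j _ => ?_)
  rw [extLast_pow_castSucc]
  exact mkFib_left_castSucc_none x g _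

lemma cycleProd_mkFib_none_last (g : G) :
    cycleProd (mkFib x g none) (Fin.last n) = g := by
  unfold cycleProd
  simp only [mkFib_right, ins_none_eq, minPeriod_extLast_last]
  have h1 : List.range 1 = [0] := by simp [List.range_succ]
  rw [h1]
  simp

lemma cycleProd_mkFib_some_notcyc (g : G) {a i : Fin n}
    (h : ∀ q : ℕ, (x.right ^ q) i ≠ a) :
    cycleProd (mkFib x g (some a)) i.castSucc = cycleProd x i := by
  unfold cycleProd
  simp only [mkFib_right, minPeriod_ins_notcyc x.right h]
  refine congrArg List.prod (List.map_congr_left fun j _ => ?_)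
  rw [ins_pow_castSucc_of_notcyc x.right h]
  refine mkFib_left_castSucc_some x g a _ fun hc => ?_
  obtain ⟨q, hq⟩ := shift_cyc hc
  exact h q hq

lemma prod_shift_aux (g : G) (F Fx : ℕ → G) (d : ℕ)
    (hF0 : F 0 = g) (hF1 : F (Nat.succ 0) = Fx 0 * g⁻¹)
    (hFj : ∀ j, j < d → F (Nat.succ (Nat.succ j)) = Fx (Nat.succ j)) :
    (((List.range (d + 2)).reverse).map F).prod =
      (((List.range (d + 1)).reverse).map Fx).prod := by
  rw [show d + 2 = (d + 1) + 1 from rfl, prod_range_reverse_bot,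
    prod_range_reverse_bot, prod_range_reverse_bot]
  simp only [Function.comp_apply]
  rw [hF0, hF1]
  have hmap : List.map ((F ∘ Nat.succ) ∘ Nat.succ) (List.range d).reverse
      = List.map (Fx ∘ Nat.succ) (List.range d).reverse := by
    refine List.map_congr_left fun j hj => ?_
    have hjd : j < d := List.mem_range.mp (List.mem_reverse.mp hj)
    simp only [Function.comp_apply]
    exact hFj j hjd
  rw [hmap]
  group

lemma cycleProd_mkFib_some_last (g : G) (a : Fin n) :
    cycleProd (mkFib x g (some a)) (Fin.last n) = cycleProd x (x.right a) := by
  set s := x.right with hs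
  obtain ⟨d, hd⟩ : ∃ d, minimalPeriod ⇑s a = d + 1 :=
    ⟨minimalPeriod ⇑s a - 1, by have := perm_minPeriod_pos s a; omega⟩
  have hper : minimalPeriod ⇑s (s a) = minimalPeriod ⇑s a :=
    minimalPeriod_apply (perm_mem_periodicPts s a)
  unfold cycleProd
  simp only [mkFib_right, ← hs, minPeriod_ins_last, hper, hd]
  refine prod_shift_aux g _ _ d ?_ ?_ ?_
  · show (mkFib x g (some a)).left (((ins s (some a)) ^ 0) (Fin.last n)) = g
    simp
  · show (mkFib x g (some a)).left (((ins s (some a)) ^ 1) (Fin.last n)) =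
      x.left ((s ^ 0) (s a)) * g⁻¹
    rw [pow_one, ins_some_last, pow_zero]
    try exact mkFib_left_castSucc_some_self x g a
  · intro j hjd
    show (mkFib x g (some a)).left (((ins s (some a)) ^ (j + 2)) (Fin.last n)) =
      x.left ((s ^ (j + 1)) (s a))
    rw [ins_pow_last s a (by omega) (by omega)]
    have harg : (s ^ (j + 2)) a = (s ^ (j + 1)) (s a) := by
      rw [← Equiv.Perm.mul_apply, ← pow_succ]; try rfl
    have hne : (s ^ (j + 2)) a ≠ s a := by
      intro hc
      have hc' : (s ^ (j + 1 + 1)) a = s a := hc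
      rw [pow_succ', Equiv.Perm.mul_apply] at hc'
      have h2 : (s ^ (j + 1)) a = a := s.injective hc'
      have hpp : IsPeriodicPt ⇑s (j + 1) a := by
        show (⇑s)^[j + 1] a = a
        rw [Equiv.Perm.iterate_eq_pow]; exact h2
      exact Function.not_isPeriodicPt_of_pos_of_lt_minimalPeriod
        (by omega) (by omega) hpp
    rw [mkFib_left_castSucc_some x g a _ hne, harg]

lemma isConj_cycleProd_apply (i : Fin n) :
    IsConj (cycleProd x i) (cycleProd x (x.right i)) := by
  set s := x.right with hs
  obtain ⟨d, hd⟩ : ∃ d, minimalPeriod ⇑s i = d + 1 :=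
    ⟨minimalPeriod ⇑s i - 1, by have := perm_minPeriod_pos s i; omega⟩
  have hper : minimalPeriod ⇑s (s i) = minimalPeriod ⇑s i :=
    minimalPeriod_apply (perm_mem_periodicPts s i)
  unfold cycleProd
  rw [hper, hd, prod_range_reverse_bot, prod_range_reverse_top]
  beta_reduce
  have h1 : x.left ((s ^ d) (s i)) = x.left i := by
    rw [← Equiv.Perm.mul_apply, ← pow_succ, ← hd, perm_pow_minPeriod]
  have h3 : x.left ((s ^ 0) i) = x.left i := by simp
  have h2 : List.map (fun j => x.left ((s ^ j) (s i))) (List.range d).reverse =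
      List.map ((fun j => x.left ((s ^ j) i)) ∘ Nat.succ) (List.range d).reverse := by
    refine List.map_congr_left fun j _ => ?_
    simp only [Function.comp_apply]
    show x.left ((s ^ j) (s i)) = x.left ((s ^ (j + 1)) i)
    rw [← Equiv.Perm.mul_apply, ← pow_succ]
  rw [h1, h3, h2, isConj_iff]
  exact ⟨x.left i, by group; rfl⟩

lemma isConj_cycleProd_pow_s9 (i : Fin n) (q : ℕ) :
    IsConj (cycleProd x i) (cycleProd x ((x.right ^ q) i)) := by
  induction q with
  | zero => simpa using IsConj.refl (cycleProd x i)
  | succ q ih =>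
    refine ih.trans ?_
    rw [pow_succ', Equiv.Perm.mul_apply]
    exact isConj_cycleProd_apply x _
end Prods

lemma IsConjClass.mem_iff {c : Set G} (hc : IsConjClass c) {u v : G}
    (h : IsConj u v) : u ∈ c ↔ v ∈ c := by
  obtain ⟨g0, rfl⟩ := hc
  exact ⟨fun h1 => h1.trans h, fun h1 => h1.trans h.symm⟩


/-! ### Counting infrastructure -/

section Counting

open Function

open scoped Classical in
lemma natCard_option_subtype {α : Type*} [Finite α] (S : Option α → Prop) :
    Nat.card {o : Option α // S o} =
      Nat.card {a : α // S (some a)} + (if S none then 1 else 0) := by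
  classical
  have e : {o : Option α // S o} ≃ {a : α // S (some a)} ⊕ PLift (S none) :=
    { toFun := fun o => match o with
        | ⟨some a, h⟩ => Sum.inl ⟨a, h⟩
        | ⟨none, h⟩ => Sum.inr ⟨h⟩
      invFun := fun q => match q with
        | Sum.inl ⟨a, h⟩ => ⟨some a, h⟩
        | Sum.inr ⟨h⟩ => ⟨none, h⟩
      left_inv := fun o => by rcases o with ⟨_ | a, h⟩ <;> rfl
      right_inv := fun q => by rcases q with ⟨a, h⟩ | ⟨h⟩ <;> rfl }
  rw [Nat.card_congr e, Nat.card_sum]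
  congr 1
  by_cases h : S none
  · rw [if_pos h]
    have : Nonempty (PLift (S none)) := ⟨⟨h⟩⟩
    exact Nat.card_unique
  · rw [if_neg h]
    have : IsEmpty (PLift (S none)) := ⟨fun q => h q.down⟩
    exact Nat.card_of_isEmpty

open scoped Classical in
lemma natCard_fin_succ_subtype (R : Fin (n + 1) → Prop) :
    Nat.card {w : Fin (n + 1) // R w} =
      Nat.card {i : Fin n // R i.castSucc} + (if R (Fin.last n) then 1 else 0) := by
  have e : {w : Fin (n + 1) // R w} ≃
      {o : Option (Fin n) // R (finSuccEquivLast.symm o)} :=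
    finSuccEquivLast.subtypeEquiv fun w => by rw [Equiv.symm_apply_apply]
  rw [Nat.card_congr e, natCard_option_subtype]
  have h1 : Nat.card {a : Fin n // R (finSuccEquivLast.symm (some a))} =
      Nat.card {i : Fin n // R i.castSucc} :=
    Nat.card_congr (Equiv.subtypeEquivRight fun a => by simp)
  have h2 : (if R (finSuccEquivLast.symm none) then 1 else 0) =
      (if R (Fin.last n) then 1 else 0) := by simp
  rw [h1, h2]

lemma natCard_subtype_iff {P Q : Fin n → Prop} (h : ∀ i, P i ↔ Q i) :
    Nat.card {i : Fin n // P i} = Nat.card {i : Fin n // Q i} :=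
  Nat.card_congr (Equiv.subtypeEquivRight h)

lemma natCard_subtype_succ {P Q : Fin n → Prop} {i0 : Fin n} (hP : P i0) (hQ : ¬Q i0)
    (h : ∀ i, i ≠ i0 → (P i ↔ Q i)) :
    Nat.card {i : Fin n // P i} = Nat.card {i : Fin n // Q i} + 1 := by
  classical
  rw [Nat.card_eq_fintype_card, Nat.card_eq_fintype_card,
    Fintype.card_subtype, Fintype.card_subtype]
  have hfil : Finset.univ.filter P = insert i0 (Finset.univ.filter Q) := by
    ext w
    simp only [Finset.mem_filter, Finset.mem_univ, true_and, Finset.mem_insert]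
    rcases eq_or_ne w i0 with rfl | hw
    · simp [hP]
    · simp [hw, h w hw]
  rw [hfil, Finset.card_insert_of_notMem (by simp [hQ])]

lemma exists_unique_minRep (s : Equiv.Perm (Fin n)) (a : Fin n) :
    ∃! i : Fin n, (∃ q : ℕ, (s ^ q) i = a) ∧ (∀ m : ℕ, i ≤ (s ^ m) i) := by
  classical
  have hne : ((Finset.range (orderOf s)).image (fun q => (s ^ q) a)).Nonempty := by
    refine ⟨a, Finset.mem_image.mpr ⟨0, Finset.mem_range.mpr (orderOf_pos s), by simp⟩⟩
  set F := (Finset.range (orderOf s)).image (fun q => (s ^ q) a) with hF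
  set i := F.min' hne with hi
  obtain ⟨q, hq1, hq2⟩ := Finset.mem_image.mp (F.min'_mem hne)
  rw [← hi] at hq2
  have hq1' : q < orderOf s := Finset.mem_range.mp hq1
  have hreach : (s ^ (orderOf s - q)) i = a := by
    rw [← hq2, ← Equiv.Perm.mul_apply, ← pow_add, Nat.sub_add_cancel hq1'.le,
      pow_orderOf_eq_one]; rfl
  have hmr : ∀ m : ℕ, i ≤ (s ^ m) i := by
    intro m
    have hmem : (s ^ m) i ∈ F := by
      rw [← hq2, ← Equiv.Perm.mul_apply, ← pow_add]
      refine Finset.mem_image.mpr ⟨(m + q) % orderOf s,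
        Finset.mem_range.mpr (Nat.mod_lt _ (orderOf_pos s)), ?_⟩
      rw [pow_mod_orderOf]
    exact F.min'_le _ hmem
  refine ⟨i, ⟨⟨orderOf s - q, hreach⟩, hmr⟩, ?_⟩
  rintro j ⟨⟨qj, hqj⟩, hmrj⟩
  obtain ⟨p, hp⟩ := cyc_symm s ⟨qj, hqj⟩
  obtain ⟨p', hp'⟩ := cyc_symm s (⟨orderOf s - q, hreach⟩ : ∃ q', (s ^ q') i = a)
  have h1 : i ≤ j := by
    have : (s ^ (p + (orderOf s - q))) i = j := by
      rw [pow_add, Equiv.Perm.mul_apply, hreach, hp]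
    rw [← this]; exact hmr _
  have h2 : j ≤ i := by
    have : (s ^ (p' + qj)) j = i := by
      rw [pow_add, Equiv.Perm.mul_apply, hqj, hp']
    rw [← this]; exact hmrj _
  exact le_antisymm h2 h1

end Counting


section CardPoints

open Function

lemma card_points_eq (x : WP G n) (c : Set G) (hc : IsConjClass c) {j : ℕ} (hj : 0 < j) :
    Nat.card {a : Fin n // minimalPeriod ⇑x.right a = j ∧ cycleProd x a ∈ c}
      = cycleCountLen x c j * j := by
  set s := x.right with hs
  set B := {i : Fin n // (∀ m : ℕ, i ≤ (s ^ m) i) ∧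
      minimalPeriod ⇑s i = j ∧ cycleProd x i ∈ c} with hB
  have key : ∀ (p : B × Fin j),
      minimalPeriod ⇑s ((s ^ (p.2 : ℕ)) p.1.1) = j ∧
        cycleProd x ((s ^ (p.2 : ℕ)) p.1.1) ∈ c := by
    rintro ⟨⟨i, hmr, hper, hprod⟩, m⟩
    constructor
    · have h1 := minimalPeriod_apply_iterate (perm_mem_periodicPts s i) (m : ℕ) (f := ⇑s)
      rw [Equiv.Perm.iterate_eq_pow] at h1
      rw [h1, hper]
    · exact (IsConjClass.mem_iff hc (isConj_cycleProd_pow_s9 x i (m : ℕ))).mp hprod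
  set f : B × Fin j → {a : Fin n // minimalPeriod ⇑s a = j ∧ cycleProd x a ∈ c} :=
    fun p => ⟨(s ^ (p.2 : ℕ)) p.1.1, key p⟩ with hf
  have hbij : Function.Bijective f := by
    constructor
    · rintro ⟨⟨i, hmr, hper, hprod⟩, m⟩ ⟨⟨i', hmr', hper', hprod'⟩, m'⟩ hpq
      have hval : (s ^ (m : ℕ)) i = (s ^ (m' : ℕ)) i' := congrArg Subtype.val hpq
      obtain ⟨p, hp⟩ := cyc_symm s (⟨(m' : ℕ), rfl⟩ : ∃ q : ℕ, (s ^ q) i' = (s ^ (m' : ℕ)) i')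
      have hcyc : ∃ q : ℕ, (s ^ q) i = i' := by
        refine ⟨p + (m : ℕ), ?_⟩
        rw [pow_add, Equiv.Perm.mul_apply, hval, hp]
      obtain ⟨q2, hq2⟩ := cyc_symm s hcyc
      have hii' : i = i' := by
        apply le_antisymm
        · obtain ⟨q1, hq1⟩ := hcyc
          rw [← hq1]; exact hmr q1
        · rw [← hq2]; exact hmr' q2
      subst hii'
      have hmm : (m : ℕ) = (m' : ℕ) := by
        refine iterate_injOn_Iio_minimalPeriod (f := ⇑s) (x := i) ?_ ?_ ?_
        · exact Set.mem_Iio.mpr (by rw [hper]; exact m.isLt)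
        · exact Set.mem_Iio.mpr (by rw [hper]; exact m'.isLt)
        · show (⇑s)^[(m : ℕ)] i = (⇑s)^[(m' : ℕ)] i
          rw [Equiv.Perm.iterate_eq_pow, Equiv.Perm.iterate_eq_pow]
          exact hval
      have : m = m' := Fin.ext hmm
      subst this
      rfl
    · rintro ⟨a', hper', hprod'⟩
      obtain ⟨i0, ⟨⟨q, hq⟩, hmr⟩, -⟩ := exists_unique_minRep s a'
      have hperi0 : minimalPeriod ⇑s i0 = j := by
        have h1 := minimalPeriod_apply_iterate (perm_mem_periodicPts s i0) q (f := ⇑s)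
        rw [Equiv.Perm.iterate_eq_pow, hq] at h1
        rw [← h1, hper']
      have hprodi0 : cycleProd x i0 ∈ c := by
        have h2 := isConj_cycleProd_pow_s9 x i0 q
        rw [hq] at h2
        exact (IsConjClass.mem_iff hc h2).mpr hprod'
      refine ⟨⟨⟨i0, hmr, hperi0, hprodi0⟩, ⟨q % j, Nat.mod_lt _ hj⟩⟩, ?_⟩
      apply Subtype.ext
      show (s ^ (q % j)) i0 = a'
      have h3 := Function.iterate_mod_minimalPeriod_eq (f := ⇑s) (x := i0) (n := q)
      rw [hperi0, Equiv.Perm.iterate_eq_pow, Equiv.Perm.iterate_eq_pow] at h3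
      rw [h3, hq]
  have hcard := Nat.card_congr (Equiv.ofBijective f hbij)
  rw [← hcard, Nat.card_prod, Nat.card_eq_fintype_card (α := Fin j), Fintype.card_fin]
  rfl

end CardPoints


/-! ### Cycle count change lemmas -/

section CountChange

open Function

variable (x : WP G n)

open scoped Classical in
lemma countLen_mkFib_none (g : G) (c : Set G) (j : ℕ) :
    cycleCountLen (mkFib x g none) c j =
      cycleCountLen x c j + (if j = 1 ∧ g ∈ c then 1 else 0) := by
  classical
  unfold cycleCountLen
  simp only [mkFib_right, ins_none_eq]
  rw [natCard_fin_succ_subtype]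
  congr 1
  · refine natCard_subtype_iff fun i => ?_
    refine and_congr (mr_extLast_iff x.right i) (and_congr ?_ ?_)
    · rw [minPeriod_extLast]
    · rw [cycleProd_mkFib_none_castSucc]
  · have hiff : ((∀ m : ℕ, Fin.last n ≤ ((extLast x.right) ^ m) (Fin.last n)) ∧
        minimalPeriod ⇑(extLast x.right) (Fin.last n) = j ∧
        cycleProd (mkFib x g none) (Fin.last n) ∈ c) ↔ (j = 1 ∧ g ∈ c) := by
      rw [minPeriod_extLast_last, cycleProd_mkFib_none_last]
      constructor
      · rintro ⟨-, h2, h3⟩; exact ⟨h2.symm, h3⟩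
      · rintro ⟨h2, h3⟩
        exact ⟨fun m => by rw [extLast_pow_last], h2.symm, h3⟩
    by_cases hj : j = 1 ∧ g ∈ c
    · rw [if_pos (hiff.mpr hj), if_pos hj]
    · rw [if_neg (fun hh => hj (hiff.mp hh)), if_neg hj]

open scoped Classical in
lemma R_cs_char (g : G) (a : Fin n) {c : Set G} (hc : IsConjClass c) (j : ℕ) (i : Fin n) :
    ((∀ m : ℕ, i.castSucc ≤ (((mkFib x g (some a)).right) ^ m) i.castSucc) ∧
      minimalPeriod ⇑((mkFib x g (some a)).right) i.castSucc = j ∧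
      cycleProd (mkFib x g (some a)) i.castSucc ∈ c)
    ↔ ((∀ m : ℕ, i ≤ (x.right ^ m) i) ∧
        (if ∃ q : ℕ, (x.right ^ q) i = a
          then minimalPeriod ⇑x.right a + 1 = j ∧ cycleProd x a ∈ c
          else minimalPeriod ⇑x.right i = j ∧ cycleProd x i ∈ c)) := by
  simp only [mkFib_right]
  by_cases hcy : ∃ q : ℕ, (x.right ^ q) i = a
  · rw [if_pos hcy]
    have hpereq : minimalPeriod ⇑x.right i = minimalPeriod ⇑x.right a := by
      obtain ⟨q, hq⟩ := hcy
      have h1 := minimalPeriod_apply_iterate (perm_mem_periodicPts x.right i) q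
        (f := ⇑x.right)
      rw [Equiv.Perm.iterate_eq_pow, hq] at h1
      exact h1.symm
    have hconj : IsConj (cycleProd (mkFib x g (some a)) i.castSucc) (cycleProd x a) := by
      obtain ⟨q, hq⟩ := hcy
      obtain ⟨u, hu⟩ := exists_ins_pow_eq x.right a i q
      rw [hq] at hu
      have hlast : ((ins x.right (some a)) ^ (u + 1)) i.castSucc = Fin.last n := by
        rw [pow_succ', Equiv.Perm.mul_apply, hu, ins_some_castSucc_self]
      have c1 := isConj_cycleProd_pow_s9 (mkFib x g (some a)) i.castSucc (u + 1)
      rw [mkFib_right, hlast, cycleProd_mkFib_some_last] at c1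
      exact c1.trans (isConj_cycleProd_apply x a).symm
    refine and_congr (mr_ins_iff x.right a i) (and_congr ?_ ?_)
    · rw [minPeriod_ins_cyc x.right hcy, hpereq]
    · exact IsConjClass.mem_iff hc hconj
  · rw [if_neg hcy]
    have hall : ∀ q : ℕ, (x.right ^ q) i ≠ a := fun q hq => hcy ⟨q, hq⟩
    refine and_congr (mr_ins_iff x.right a i) (and_congr ?_ ?_)
    · rw [minPeriod_ins_notcyc x.right hall]
    · rw [cycleProd_mkFib_some_notcyc x g hall]

lemma countLen_mkFib_some_last_if (g : G) (a : Fin n) (c : Set G) (j : ℕ) :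
    cycleCountLen (mkFib x g (some a)) c j =
      Nat.card {i : Fin n //
        (∀ m : ℕ, i.castSucc ≤ (((mkFib x g (some a)).right) ^ m) i.castSucc) ∧
        minimalPeriod ⇑((mkFib x g (some a)).right) i.castSucc = j ∧
        cycleProd (mkFib x g (some a)) i.castSucc ∈ c} := by
  classical
  unfold cycleCountLen
  rw [natCard_fin_succ_subtype]
  have h0 : ¬ ((∀ m : ℕ, Fin.last n ≤ (((mkFib x g (some a)).right) ^ m) (Fin.last n)) ∧
      minimalPeriod ⇑((mkFib x g (some a)).right) (Fin.last n) = j ∧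
      cycleProd (mkFib x g (some a)) (Fin.last n) ∈ c) := by
    rintro ⟨h1, -, -⟩
    exact not_mr_ins_last x.right a h1
  rw [if_neg h0]
  omega

lemma countLen_mkFib_some_other (g : G) (a : Fin n) {c : Set G} (hc : IsConjClass c)
    {j : ℕ} (h1 : ¬(j = minimalPeriod ⇑x.right a ∧ cycleProd x a ∈ c))
    (h2 : ¬(j = minimalPeriod ⇑x.right a + 1 ∧ cycleProd x a ∈ c)) :
    cycleCountLen (mkFib x g (some a)) c j = cycleCountLen x c j := by
  classical
  rw [countLen_mkFib_some_last_if]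
  unfold cycleCountLen
  refine natCard_subtype_iff fun i => ?_
  rw [R_cs_char x g a hc j i]
  refine and_congr Iff.rfl ?_
  by_cases hcy : ∃ q : ℕ, (x.right ^ q) i = a
  · rw [if_pos hcy]
    have hpereq : minimalPeriod ⇑x.right i = minimalPeriod ⇑x.right a := by
      obtain ⟨q, hq⟩ := hcy
      have hh := minimalPeriod_apply_iterate (perm_mem_periodicPts x.right i) q
        (f := ⇑x.right)
      rw [Equiv.Perm.iterate_eq_pow, hq] at hh
      exact hh.symm
    have hprodiff : cycleProd x i ∈ c ↔ cycleProd x a ∈ c := by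
      obtain ⟨q, hq⟩ := hcy
      have hco := isConj_cycleProd_pow_s9 x i q
      rw [hq] at hco
      exact IsConjClass.mem_iff hc hco
    constructor
    · rintro ⟨ha, hb⟩
      exact absurd ⟨ha.symm, hb⟩ h2
    · rintro ⟨ha, hb⟩
      rw [hpereq] at ha
      exact absurd ⟨ha.symm, hprodiff.mp hb⟩ h1
  · rw [if_neg hcy]

lemma countLen_mkFib_some_up (g : G) (a : Fin n) {c : Set G} (hc : IsConjClass c)
    (hPa : cycleProd x a ∈ c) :
    cycleCountLen (mkFib x g (some a)) c (minimalPeriod ⇑x.right a + 1) =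
      cycleCountLen x c (minimalPeriod ⇑x.right a + 1) + 1 := by
  classical
  obtain ⟨i0, ⟨hcyc0, hmr0⟩, huniq⟩ := exists_unique_minRep x.right a
  have hper0 : minimalPeriod ⇑x.right i0 = minimalPeriod ⇑x.right a := by
    obtain ⟨q, hq⟩ := hcyc0
    have hh := minimalPeriod_apply_iterate (perm_mem_periodicPts x.right i0) q
      (f := ⇑x.right)
    rw [Equiv.Perm.iterate_eq_pow, hq] at hh
    exact hh.symm
  rw [countLen_mkFib_some_last_if]
  unfold cycleCountLen
  refine natCard_subtype_succ (i0 := i0) ?_ ?_ ?_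
  · rw [R_cs_char x g a hc _ i0, if_pos hcyc0]
    exact ⟨hmr0, rfl, hPa⟩
  · rintro ⟨-, hb, -⟩
    rw [hper0] at hb
    omega
  · intro i hi
    rw [R_cs_char x g a hc _ i]
    by_cases hcy : ∃ q : ℕ, (x.right ^ q) i = a
    · constructor
      · rintro ⟨hmr, -⟩
        exact absurd (huniq i ⟨hcy, hmr⟩) hi
      · rintro ⟨hmr, -⟩
        exact absurd (huniq i ⟨hcy, hmr⟩) hi
    · rw [if_neg hcy]

lemma countLen_mkFib_some_down (g : G) (a : Fin n) {c : Set G} (hc : IsConjClass c)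
    (hPa : cycleProd x a ∈ c) :
    cycleCountLen x c (minimalPeriod ⇑x.right a) =
      cycleCountLen (mkFib x g (some a)) c (minimalPeriod ⇑x.right a) + 1 := by
  classical
  obtain ⟨i0, ⟨hcyc0, hmr0⟩, huniq⟩ := exists_unique_minRep x.right a
  have hper0 : minimalPeriod ⇑x.right i0 = minimalPeriod ⇑x.right a := by
    obtain ⟨q, hq⟩ := hcyc0
    have hh := minimalPeriod_apply_iterate (perm_mem_periodicPts x.right i0) q
      (f := ⇑x.right)
    rw [Equiv.Perm.iterate_eq_pow, hq] at hh
    exact hh.symm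
  have hprod0 : cycleProd x i0 ∈ c := by
    obtain ⟨q, hq⟩ := hcyc0
    have hco := isConj_cycleProd_pow_s9 x i0 q
    rw [hq] at hco
    exact (IsConjClass.mem_iff hc hco).mpr hPa
  rw [countLen_mkFib_some_last_if]
  unfold cycleCountLen
  refine natCard_subtype_succ (i0 := i0) ?_ ?_ ?_
  · exact ⟨hmr0, hper0, hprod0⟩
  · rw [R_cs_char x g a hc _ i0, if_pos hcyc0]
    rintro ⟨-, hb, -⟩
    omega
  · intro i hi
    rw [R_cs_char x g a hc _ i]
    by_cases hcy : ∃ q : ℕ, (x.right ^ q) i = a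
    · constructor
      · rintro ⟨hmr, -⟩
        exact absurd (huniq i ⟨hcy, hmr⟩) hi
      · rintro ⟨hmr, -⟩
        exact absurd (huniq i ⟨hcy, hmr⟩) hi
    · rw [if_neg hcy]

end CountChange

end WP

end WreathPaper

namespace WreathPaper

open WP in
/-- Counting preimages under `p_{n,n+1}` with a prescribed change of multiple cycle
type: inserting `n+1` into a cycle of length `L−1` and type `c_l` (for `L ≥ 2`) can be
done in `|G|·(L−1)·r` ways, and creating a new fixed point of type `c_l` (`L = 1`)
in `|c_l|` ways. -/
theorem fiber_count_cycle_type {G : Type*} [Group G] {n k : ℕ}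
    (c : Fin k → Set G) (hconj : ∀ l, IsConjClass (c l))
    (hpart : ∀ g : G, ∃! l, g ∈ c l)
    (x : WP G n) (l : Fin k) (L : ℕ) (hL : 1 ≤ L) :
    (2 ≤ L →
      Nat.card {y : WP G (n + 1) // proj y = x ∧
          cycleCountLen y (c l) L = cycleCountLen x (c l) L + 1 ∧
          cycleCountLen x (c l) (L - 1) = cycleCountLen y (c l) (L - 1) + 1 ∧
          ∀ (j : ℕ) (m : Fin k), ¬ (j = L ∧ m = l) → ¬ (j = L - 1 ∧ m = l) →
            cycleCountLen y (c m) j = cycleCountLen x (c m) j}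
        = Nat.card G * (L - 1) * cycleCountLen x (c l) (L - 1)) ∧
    (L = 1 →
      Nat.card {y : WP G (n + 1) // proj y = x ∧
          cycleCountLen y (c l) 1 = cycleCountLen x (c l) 1 + 1 ∧
          ∀ (j : ℕ) (m : Fin k), ¬ (j = 1 ∧ m = l) →
            cycleCountLen y (c m) j = cycleCountLen x (c m) j}
        = Nat.card (c l)) := by
  constructor
  · -- case L ≥ 2
    intro hL2
    have hL1 : L - 1 + 1 = L := by omega
    have hL1pos : 0 < L - 1 := by omega
    set A := {a : Fin n // Function.minimalPeriod ⇑x.right a = L - 1 ∧ cycleProd x a ∈ c l}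
      with hA
    have hmem : ∀ (g : G) (a : A),
        proj (mkFib x g (some a.1)) = x ∧
        cycleCountLen (mkFib x g (some a.1)) (c l) L = cycleCountLen x (c l) L + 1 ∧
        cycleCountLen x (c l) (L - 1) =
          cycleCountLen (mkFib x g (some a.1)) (c l) (L - 1) + 1 ∧
        ∀ (j : ℕ) (m : Fin k), ¬ (j = L ∧ m = l) → ¬ (j = L - 1 ∧ m = l) →
          cycleCountLen (mkFib x g (some a.1)) (c m) j = cycleCountLen x (c m) j := by
      rintro g ⟨a, hper, hprod⟩
      refine ⟨proj_mkFib x g _, ?_, ?_, ?_⟩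
      · have h1 := countLen_mkFib_some_up x g a (hconj l) hprod
        rw [hper, hL1] at h1
        exact h1
      · have h1 := countLen_mkFib_some_down x g a (hconj l) hprod
        rw [hper] at h1
        exact h1
      · intro j m hm1 hm2
        refine countLen_mkFib_some_other x g a (hconj m) ?_ ?_
        · rintro ⟨hj, hmem'⟩
          rw [hper] at hj
          exact hm2 ⟨hj, (hpart _).unique hmem' hprod⟩
        · rintro ⟨hj, hmem'⟩
          rw [hper, hL1] at hj
          exact hm1 ⟨hj, (hpart _).unique hmem' hprod⟩
    set Φ : G × A → {y : WP G (n + 1) // proj y = x ∧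
        cycleCountLen y (c l) L = cycleCountLen x (c l) L + 1 ∧
        cycleCountLen x (c l) (L - 1) = cycleCountLen y (c l) (L - 1) + 1 ∧
        ∀ (j : ℕ) (m : Fin k), ¬ (j = L ∧ m = l) → ¬ (j = L - 1 ∧ m = l) →
          cycleCountLen y (c m) j = cycleCountLen x (c m) j} :=
      fun p => ⟨mkFib x p.1 (some p.2.1), hmem p.1 p.2⟩ with hΦ
    have hbij : Function.Bijective Φ := by
      constructor
      · rintro ⟨g, a⟩ ⟨g', a'⟩ hp
        have hval : mkFib x g (some a.1) = mkFib x g' (some a'.1) :=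
          congrArg Subtype.val hp
        have := mkFib_injective x (a₁ := (g, some a.1)) (a₂ := (g', some a'.1)) hval
        have hg : g = g' := congrArg Prod.fst this
        have ha : a.1 = a'.1 := Option.some_injective _ (congrArg Prod.snd this)
        exact Prod.ext hg (Subtype.ext ha)
      · rintro ⟨y, hy1, hy2, hy3, hy4⟩
        obtain ⟨g, o, rfl⟩ := exists_mkFib x hy1
        cases o with
        | none =>
          exfalso
          have h5 : cycleCountLen x (c l) (L - 1) ≤
              cycleCountLen (mkFib x g none) (c l) (L - 1) :=
            (countLen_mkFib_none x g (c l) (L - 1)) ▸ Nat.le_add_right _ _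
          omega
        | some a =>
          obtain ⟨m0, hm0, -⟩ := hpart (cycleProd x a)
          have hB := countLen_mkFib_some_up x g a (hconj m0) hm0
          have hMatch : Function.minimalPeriod ⇑x.right a + 1 = L ∧ m0 = l := by
            by_contra hcon
            by_cases hex : Function.minimalPeriod ⇑x.right a + 1 = L - 1 ∧ m0 = l
            · obtain ⟨he1, he2⟩ := hex
              rw [he1, he2] at hB
              omega
            · have := hy4 (Function.minimalPeriod ⇑x.right a + 1) m0
                (fun hh => hcon hh) (fun hh => hex hh)
              omega
          obtain ⟨hM1, hM2⟩ := hMatch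
          have hper : Function.minimalPeriod ⇑x.right a = L - 1 := by omega
          refine ⟨(g, ⟨a, hper, hM2 ▸ hm0⟩), rfl⟩
    have hcongr := Nat.card_congr (Equiv.ofBijective Φ hbij)
    rw [← hcongr, Nat.card_prod, hA, card_points_eq x (c l) (hconj l) hL1pos]
    ring
  · -- case L = 1
    intro hL1
    subst hL1
    have hmem : ∀ (g : {g : G // g ∈ c l}),
        proj (mkFib x g.1 none) = x ∧
        cycleCountLen (mkFib x g.1 none) (c l) 1 = cycleCountLen x (c l) 1 + 1 ∧
        ∀ (j : ℕ) (m : Fin k), ¬ (j = 1 ∧ m = l) →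
          cycleCountLen (mkFib x g.1 none) (c m) j = cycleCountLen x (c m) j := by
      rintro ⟨g, hg⟩
      refine ⟨proj_mkFib x g _, ?_, ?_⟩
      · have h1 := countLen_mkFib_none x g (c l) 1
        rw [if_pos ⟨rfl, hg⟩] at h1
        exact h1
      · intro j m hm
        have h1 := countLen_mkFib_none x g (c m) j
        rw [if_neg (fun hh => hm ⟨hh.1, (hpart g).unique hh.2 hg⟩)] at h1
        simpa using h1
    set Φ : {g : G // g ∈ c l} → {y : WP G (n + 1) // proj y = x ∧
        cycleCountLen y (c l) 1 = cycleCountLen x (c l) 1 + 1 ∧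
        ∀ (j : ℕ) (m : Fin k), ¬ (j = 1 ∧ m = l) →
          cycleCountLen y (c m) j = cycleCountLen x (c m) j} :=
      fun g => ⟨mkFib x g.1 none, hmem g⟩ with hΦ
    have hbij : Function.Bijective Φ := by
      constructor
      · rintro ⟨g, hg⟩ ⟨g', hg'⟩ hp
        have hval : mkFib x g none = mkFib x g' none := congrArg Subtype.val hp
        have := mkFib_injective x (a₁ := (g, none)) (a₂ := (g', none)) hval
        exact Subtype.ext (congrArg Prod.fst this)
      · rintro ⟨y, hy1, hy2, hy3⟩
        obtain ⟨g, o, rfl⟩ := exists_mkFib x hy1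
        cases o with
        | some a =>
          exfalso
          obtain ⟨m0, hm0, -⟩ := hpart (cycleProd x a)
          have hA := countLen_mkFib_some_down x g a (hconj m0) hm0
          have hB := countLen_mkFib_some_up x g a (hconj m0) hm0
          by_cases hex : Function.minimalPeriod ⇑x.right a = 1 ∧ m0 = l
          · obtain ⟨he1, he2⟩ := hex
            rw [he1, he2] at hB
            have h2 := hy3 2 l (by simp)
            norm_num at hB
            omega
          · have := hy3 (Function.minimalPeriod ⇑x.right a) m0 (fun hh => hex hh)
            omega
        | none =>
          have hg : g ∈ c l := by
            by_contra hg
            have h1 := countLen_mkFib_none x g (c l) 1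
            rw [if_neg (fun hh => hg hh.2)] at h1
            omega
          exact ⟨⟨g, hg⟩, rfl⟩
    have hcongr := Nat.card_congr (Equiv.ofBijective Φ hbij)
    rw [← hcongr]


end WreathPaper
end

section
/- For every x, y ∈ G≀S(n) and every l ∈ {1,…,k}: [y·x·y^{-1}]_{c_l} = [x]_{c_l}. Consequently, for all t_1,…,t_k > 0 the Ewens measure P^Ewens_{t_1,…,t_k;n} on G≀S(n) is invariant under conjugation (i.e. it is a central measure). -/
namespace WreathPaper

/-- `T = t₁/ζ_{c₁} + ⋯ + t_k/ζ_{c_k}` where `ζ_{c_l} = |G|/|c_l|`. -/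
noncomputable def ewensT {G : Type*} [Group G] [Fintype G] {k : ℕ}
    (t : Fin k → ℝ) (c : Fin k → Set G) : ℝ :=
  ∑ l, t l * (Nat.card (c l) : ℝ) / (Fintype.card G : ℝ)

/-- The Ewens probability distribution on `G ≀ S(n)`:
`P(x) = t₁^{[x]_{c₁}} ⋯ t_k^{[x]_{c_k}} / (|G|ⁿ (T)ₙ)`. -/
noncomputable def ewensP {G : Type*} [Group G] [Fintype G] {k n : ℕ}
    (t : Fin k → ℝ) (c : Fin k → Set G) (x : WP G n) : ℝ :=
  (∏ l, t l ^ WP.cycleCount x (c l)) /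
    ((Fintype.card G : ℝ) ^ n * (ascPochhammer ℝ n).eval (ewensT t c))

end WreathPaper


namespace WreathPaper
open Equiv Function

section Aux

variable {G : Type*} [Group G] {n : ℕ}

lemma perm_periodic (p : Equiv.Perm (Fin n)) (i : Fin n) : i ∈ periodicPts ⇑p := by
  refine ⟨orderOf p, orderOf_pos p, ?_⟩
  show p^[orderOf p] i = i
  rw [← Equiv.Perm.coe_pow, pow_orderOf_eq_one]
  rfl

lemma conj_pow_eq (u s : Equiv.Perm (Fin n)) (m : ℕ) :
    (u * s * u⁻¹) ^ m = u * s ^ m * u⁻¹ := by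
  induction m with
  | zero => simp
  | succ m ih => rw [pow_succ, pow_succ, ih]; group

lemma conj_pow_apply (u s : Equiv.Perm (Fin n)) (m : ℕ) (i : Fin n) :
    ((u * s * u⁻¹) ^ m) (u i) = u ((s ^ m) i) := by
  simp [conj_pow_eq, Equiv.Perm.mul_apply]

lemma minPer_conj (u s : Equiv.Perm (Fin n)) (i : Fin n) :
    minimalPeriod ⇑(u * s * u⁻¹) (u i) = minimalPeriod ⇑s i := by
  have key : ∀ m : ℕ, IsPeriodicPt ⇑(u * s * u⁻¹) m (u i) ↔ IsPeriodicPt ⇑s m i := by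
    intro m
    show (u * s * u⁻¹)^[m] (u i) = u i ↔ s^[m] i = i
    rw [← Equiv.Perm.coe_pow, ← Equiv.Perm.coe_pow, conj_pow_apply]
    exact u.apply_eq_iff_eq
  refine Nat.dvd_antisymm ?_ ?_
  · rw [← isPeriodicPt_iff_minimalPeriod_dvd, key]
    exact isPeriodicPt_minimalPeriod _ _
  · rw [← isPeriodicPt_iff_minimalPeriod_dvd, ← key]
    exact isPeriodicPt_minimalPeriod _ _

noncomputable def minRep (p : Equiv.Perm (Fin n)) (i : Fin n) : Fin n :=
  (Finset.univ.filter fun j => p.SameCycle i j).min' ⟨i, by simp [Equiv.Perm.SameCycle.refl]⟩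

lemma sameCycle_minRep (p : Equiv.Perm (Fin n)) (i : Fin n) : p.SameCycle i (minRep p i) := by
  have := (Finset.univ.filter fun j => p.SameCycle i j).min'_mem
    ⟨i, by simp [Equiv.Perm.SameCycle.refl]⟩
  simpa [minRep] using this

lemma minRep_congr {p : Equiv.Perm (Fin n)} {i j : Fin n} (h : p.SameCycle i j) :
    minRep p i = minRep p j := by
  unfold minRep
  congr 1
  ext a
  simp only [Finset.mem_filter, Finset.mem_univ, true_and]
  exact ⟨fun ha => h.symm.trans ha, fun ha => h.trans ha⟩

lemma minRep_le {p : Equiv.Perm (Fin n)} {i j : Fin n} (h : p.SameCycle i j) :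
    minRep p i ≤ j := by
  apply Finset.min'_le
  simp [h]

lemma minRep_min (p : Equiv.Perm (Fin n)) (i : Fin n) (m : ℕ) :
    minRep p i ≤ (p ^ m) (minRep p i) := by
  apply minRep_le
  exact (sameCycle_minRep p i).trans ⟨(m : ℤ), by simp⟩

lemma minRep_eq_self {p : Equiv.Perm (Fin n)} {i : Fin n} (h : ∀ m : ℕ, i ≤ (p ^ m) i) :
    minRep p i = i := by
  refine le_antisymm (minRep_le (Equiv.Perm.SameCycle.refl p i)) ?_
  obtain ⟨m, -, hm⟩ := (sameCycle_minRep p i).exists_pow_eq'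
  rw [← hm]; exact h m

lemma telescope (a b : ℕ → G) (r : ℕ) :
    ((List.range r).reverse.map (fun j => a (j + 1) * b j * (a j)⁻¹)).prod
      = a r * ((List.range r).reverse.map b).prod * (a 0)⁻¹ := by
  induction r with
  | zero => simp
  | succ r ih =>
    rw [List.range_succ, List.reverse_append]
    simp only [List.reverse_singleton, List.singleton_append, List.map_cons, List.prod_cons, ih]
    group

open WP

lemma pow_at_minPer (p : Equiv.Perm (Fin n)) (i : Fin n) :
    (p ^ minimalPeriod ⇑p i) i = i := by
  have := isPeriodicPt_minimalPeriod ⇑p i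
  rwa [IsPeriodicPt, IsFixedPt, ← Equiv.Perm.coe_pow] at this

lemma cycleProd_apply (x : WP G n) (i : Fin n) :
    cycleProd x (x.right i) = x.left i * cycleProd x i * (x.left i)⁻¹ := by
  set s := x.right with hs
  set F : ℕ → G := fun j => x.left ((s ^ j) i) with hF
  have hper : minimalPeriod ⇑s (s i) = minimalPeriod ⇑s i :=
    minimalPeriod_apply (perm_periodic s i)
  obtain ⟨m, hm⟩ : ∃ m, minimalPeriod ⇑s i = m + 1 :=
    ⟨minimalPeriod ⇑s i - 1, (Nat.succ_pred_eq_of_pos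
      (minimalPeriod_pos_of_mem_periodicPts (perm_periodic s i))).symm⟩
  have hshift : (fun j => x.left ((s ^ j) (s i))) = fun j => F (j + 1) := by
    funext j
    simp [hF, pow_succ, Equiv.Perm.mul_apply]
  have h1 : cycleProd x (s i)
      = F (m + 1) * ((List.range m).reverse.map (fun j => F (j + 1))).prod := by
    rw [cycleProd, hper, ← hs, hm, hshift, List.range_succ, List.reverse_append]
    simp
  have h2 : cycleProd x i
      = ((List.range m).reverse.map (fun j => F (j + 1))).prod * F 0 := by
    rw [cycleProd, ← hs, hm, List.range_succ_eq_map, List.reverse_cons, List.map_append,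
      List.prod_append, List.map_reverse, List.map_map, List.map_reverse]
    simp [hF, Function.comp_def]
  have hF0 : F 0 = x.left i := by simp [hF]
  have hFr : F (m + 1) = x.left i := by
    simp only [hF]
    rw [← hm, pow_at_minPer]
  rw [h1, h2, hF0, hFr]
  group

lemma isConj_cycleProd_pow (x : WP G n) (i : Fin n) (m : ℕ) :
    IsConj (cycleProd x i) (cycleProd x ((x.right ^ m) i)) := by
  induction m with
  | zero =>
    have h : (x.right ^ 0) i = i := by simp
    rw [h]
  | succ m ih =>
    have h : (x.right ^ (m + 1)) i = x.right ((x.right ^ m) i) := by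
      rw [pow_succ', Equiv.Perm.mul_apply]
    rw [h, cycleProd_apply]
    exact ih.trans (isConj_iff.mpr ⟨x.left ((x.right ^ m) i), rfl⟩)

lemma sameCycle_isConj {x : WP G n} {i j : Fin n} (h : x.right.SameCycle i j) :
    IsConj (cycleProd x i) (cycleProd x j) := by
  obtain ⟨m, -, rfl⟩ := h.exists_pow_eq'
  exact isConj_cycleProd_pow x i m

lemma conj_right (x y : WP G n) : (y * x * y⁻¹).right = y.right * x.right * y.right⁻¹ := rfl

lemma conj_left (x y : WP G n) (j : Fin n) :
    (y * x * y⁻¹).left j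
      = y.left j * x.left (y.right⁻¹ j) * (y.left (y.right (x.right⁻¹ (y.right⁻¹ j))))⁻¹ := by
  rfl

lemma isConj_cycleProd_conj (x y : WP G n) (i : Fin n) :
    IsConj (cycleProd x i) (cycleProd (y * x * y⁻¹) (y.right i)) := by
  set s := x.right with hs
  set u := y.right with hu
  set a : ℕ → G := fun j => y.left (u (s⁻¹ ((s ^ j) i))) with ha
  set b : ℕ → G := fun j => x.left ((s ^ j) i) with hb
  have hper : minimalPeriod ⇑((y * x * y⁻¹).right) (u i) = minimalPeriod ⇑s i := by
    rw [conj_right]; exact minPer_conj u s i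
  set r := minimalPeriod ⇑s i with hr
  have hterm : (fun j => (y * x * y⁻¹).left (((y * x * y⁻¹).right ^ j) (u i)))
      = fun j => a (j + 1) * b j * (a j)⁻¹ := by
    funext j
    rw [conj_right, ← hs, ← hu, conj_pow_apply, conj_left, ← hs, ← hu]
    have h1 : u⁻¹ (u ((s ^ j) i)) = (s ^ j) i := by simp
    rw [h1]
    have hsj : s⁻¹ ((s ^ (j + 1)) i) = (s ^ j) i := by
      rw [pow_succ', Equiv.Perm.mul_apply, Equiv.Perm.inv_def, Equiv.symm_apply_apply]
    have h2 : a (j + 1) = y.left (u ((s ^ j) i)) := by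
      show y.left (u (s⁻¹ ((s ^ (j + 1)) i))) = _
      rw [hsj]
    rw [h2]
  have hz : cycleProd (y * x * y⁻¹) (u i)
      = ((List.range r).reverse.map fun j => a (j + 1) * b j * (a j)⁻¹).prod := by
    rw [cycleProd, hper, hterm]
  have hx : cycleProd x i = ((List.range r).reverse.map b).prod := rfl
  have har : a r = a 0 := by
    simp only [ha, pow_zero, Equiv.Perm.one_apply]
    rw [pow_at_minPer]
  rw [isConj_iff]
  exact ⟨a 0, by rw [hz, telescope, har, hx]⟩

lemma cycleCount_conj (x y : WP G n) {c : Set G}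
    (hc : ∀ {g h : G}, IsConj g h → g ∈ c → h ∈ c) :
    cycleCount (y * x * y⁻¹) c = cycleCount x c := by
  set s := x.right with hs
  set u := y.right with hu
  apply Nat.card_congr
  refine ⟨fun j => ⟨minRep s (u⁻¹ j.1), ?_, ?_⟩, fun i => ⟨minRep ((y * x * y⁻¹).right) (u i.1), ?_, ?_⟩, ?_, ?_⟩
  · exact fun m => minRep_min s (u⁻¹ j.1) m
  · have h1 : IsConj (cycleProd x (u⁻¹ j.1)) (cycleProd (y * x * y⁻¹) j.1) := by
      have := isConj_cycleProd_conj x y (u⁻¹ j.1)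
      simpa [← hu] using this
    exact hc (sameCycle_isConj (sameCycle_minRep s (u⁻¹ j.1))) (hc h1.symm j.2.2)
  · intro m
    exact minRep_min _ (u i.1) m
  · have h1 : IsConj (cycleProd x i.1) (cycleProd (y * x * y⁻¹) (u i.1)) :=
      isConj_cycleProd_conj x y i.1
    exact hc (sameCycle_isConj (sameCycle_minRep _ (u i.1))) (hc h1 i.2.2)
  · rintro ⟨j, hj1, hj2⟩
    apply Subtype.ext
    show minRep ((y * x * y⁻¹).right) (u (minRep s (u⁻¹ j))) = j
    obtain ⟨m, -, hm⟩ := (sameCycle_minRep s (u⁻¹ j)).exists_pow_eq'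
    have key : u (minRep s (u⁻¹ j)) = ((y * x * y⁻¹).right ^ m) j := by
      rw [← hm, conj_right, ← hs, ← hu]
      have := conj_pow_apply u s m (u⁻¹ j)
      simpa using this.symm
    have hsc : ((y * x * y⁻¹).right).SameCycle (u (minRep s (u⁻¹ j))) j := by
      refine Equiv.Perm.SameCycle.symm ⟨(m : ℤ), ?_⟩
      rw [zpow_natCast, ← key]
    rw [minRep_congr hsc, minRep_eq_self hj1]
  · rintro ⟨i, hi1, hi2⟩
    apply Subtype.ext
    show minRep s (u⁻¹ (minRep ((y * x * y⁻¹).right) (u i))) = i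
    obtain ⟨m, -, hm⟩ := (sameCycle_minRep ((y * x * y⁻¹).right) (u i)).exists_pow_eq'
    have key : u⁻¹ (minRep ((y * x * y⁻¹).right) (u i)) = (s ^ m) i := by
      rw [← hm, conj_right, ← hs, ← hu, conj_pow_apply]
      simp
    have hsc : s.SameCycle (u⁻¹ (minRep ((y * x * y⁻¹).right) (u i))) i := by
      refine Equiv.Perm.SameCycle.symm ⟨(m : ℤ), ?_⟩
      rw [zpow_natCast, ← key]
    rw [minRep_congr hsc, minRep_eq_self hi1]

end Aux

end WreathPaper

namespace WreathPaper

open WP in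
/-- Cycle counts are invariant under conjugation; consequently the Ewens measure
on `G ≀ S(n)` is a central measure. -/
theorem ewens_central {G : Type*} [Group G] [Fintype G] {n k : ℕ}
    (c : Fin k → Set G) (hconj : ∀ l, IsConjClass (c l))
    (hpart : ∀ g : G, ∃! l, g ∈ c l) (t : Fin k → ℝ) (ht : ∀ l, 0 < t l) :
    (∀ (x y : WP G n) (l : Fin k),
        cycleCount (y * x * y⁻¹) (c l) = cycleCount x (c l)) ∧
    (∀ x y : WP G n, ewensP t c (y * x * y⁻¹) = ewensP t c x) := by
  have main : ∀ (x y : WP G n) (l : Fin k),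
      cycleCount (y * x * y⁻¹) (c l) = cycleCount x (c l) := by
    intro x y l
    obtain ⟨g, hg⟩ := hconj l
    refine cycleCount_conj x y ?_
    intro a b hab ha
    rw [hg] at ha ⊢
    exact ha.trans hab
  refine ⟨main, fun x y => ?_⟩
  unfold ewensP
  congr 1
  exact Finset.prod_congr rfl fun l _ => by rw [main x y l]

end WreathPaper
end

section
/- Fix nonzero complex numbers z_1,…,z_k, set t_l = z_l·conj(z_l) and T = t_1/ζ_{c_1}+⋯+t_k/ζ_{c_k}, and define F : G≀S(n) → ℂ by F(x) = (n!/(T)_n)^{1/2}·z_1^{[x]_{c_1}}·z_2^{[x]_{c_2}}⋯z_k^{[x]_{c_k}}. Then: (a) for all functions f, g : G≀S(n) → ℂ, Σ_{x∈G≀S(n)} P^Ewens_{t_1,…,t_k;n}(x)·f(x)·conj(g(x)) = (1/(|G|^n·n!))·Σ_{x∈G≀S(n)} F(x)f(x)·conj(F(x)g(x)); in other words, multiplication by F is an isometry from L²(G≀S(n), P^Ewens_{t_1,…,t_k;n}) to L²(G≀S(n), uniform probability measure); (b) for every pair (w_1,w_2) ∈ (G≀S(n)) × (G≀S(n)) and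 every x ∈ G≀S(n): F(x)·z_1^{[w_2^{-1}xw_1]_{c_1}−[x]_{c_1}}⋯z_k^{[w_2^{-1}xw_1]_{c_k}−[x]_{c_k}} = F(w_2^{-1}xw_1); in other words, multiplication by F intertwines the representation (T_{z_1,…,z_k}(w_1,w_2)f)(x) = f(w_2^{-1}xw_1)·∏_{l=1}^k z_l^{[w_2^{-1}xw_1]_{c_l}−[x]_{c_l}} of (G≀S(n)) × (G≀S(n)) with the two-sided regular representation (Reg(w_1,w_2)φ)(x) = φ(w_2^{-1}xw_1). -/
namespace WreathPaper

/-- The multiplier `F(x) = (n!/(T)ₙ)^{1/2} z₁^{[x]_{c₁}} ⋯ z_k^{[x]_{c_k}}`. -/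
noncomputable def Fz {G : Type*} [Group G] [Fintype G] {k n : ℕ}
    (z : Fin k → ℂ) (c : Fin k → Set G) (x : WP G n) : ℂ :=
  (Real.sqrt ((n.factorial : ℝ) /
      (ascPochhammer ℝ n).eval (ewensT (fun l => Complex.normSq (z l)) c)) : ℂ) *
    ∏ l, z l ^ WP.cycleCount x (c l)

open WP in
/-- Multiplication by `F` is an isometry from `L²(G≀S(n), P^Ewens)` onto
`L²(G≀S(n), uniform)` which intertwines the generalized regular representation
`T_{z₁,…,z_k}` with the two-sided regular representation. -/
theorem Fz_isometry_intertwines {G : Type*} [Group G] [Fintype G] {k n : ℕ}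
    (z : Fin k → ℂ) (hz : ∀ l, z l ≠ 0) (c : Fin k → Set G)
    (hconj : ∀ l, IsConjClass (c l)) (hpart : ∀ g : G, ∃! l, g ∈ c l) :
    (∀ f g : WP G n → ℂ,
      (∑ x : WP G n,
        (ewensP (fun l => Complex.normSq (z l)) c x : ℂ) * f x * (starRingEnd ℂ) (g x))
        = (1 / ((Fintype.card G : ℂ) ^ n * (n.factorial : ℂ))) *
            ∑ x : WP G n, (Fz z c x * f x) * (starRingEnd ℂ) (Fz z c x * g x)) ∧
    (∀ (w₁ w₂ : WP G n) (x : WP G n),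
      Fz z c x *
          ∏ l, z l ^ ((cycleCount (w₂⁻¹ * x * w₁) (c l) : ℤ) - (cycleCount x (c l) : ℤ))
        = Fz z c (w₂⁻¹ * x * w₁)) := by
  set t : Fin k → ℝ := fun l => Complex.normSq (z l) with ht
  have hT : 0 < ewensT t c := by
    obtain ⟨l₀, hl₀, -⟩ := hpart 1
    haveI : Nonempty (c l₀) := ⟨⟨1, hl₀⟩⟩
    have h1 : (0:ℝ) < Nat.card (c l₀) := by exact_mod_cast Nat.card_pos
    have h2 : (0:ℝ) < t l₀ := Complex.normSq_pos.2 (hz l₀)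
    have h3 : (0:ℝ) < Fintype.card G := by exact_mod_cast Fintype.card_pos
    exact Finset.sum_pos'
      (fun l _ => div_nonneg (mul_nonneg (Complex.normSq_nonneg _) (Nat.cast_nonneg _))
        (Nat.cast_nonneg _))
      ⟨l₀, Finset.mem_univ _, div_pos (mul_pos h2 h1) h3⟩
  have hP : 0 < (ascPochhammer ℝ n).eval (ewensT t c) := ascPochhammer_pos _ _ hT
  set P : ℝ := (ascPochhammer ℝ n).eval (ewensT t c) with hPdef
  have hCG : (Fintype.card G : ℂ) ≠ 0 := by
    exact_mod_cast Nat.cast_ne_zero.2 Fintype.card_ne_zero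
  have hfac : ((n.factorial : ℝ) : ℂ) ≠ 0 := by
    exact_mod_cast Nat.cast_ne_zero.2 n.factorial_ne_zero
  have hPne : ((P : ℝ) : ℂ) ≠ 0 := by exact_mod_cast hP.ne'
  have hC2 : ((Real.sqrt ((n.factorial : ℝ) / P) : ℝ) : ℂ) *
      ((Real.sqrt ((n.factorial : ℝ) / P) : ℝ) : ℂ) = ((n.factorial : ℝ) / P : ℝ) := by
    rw [← Complex.ofReal_mul, Real.mul_self_sqrt (by positivity)]
  have key : ∀ x : WP G n, (ewensP t c x : ℂ) =
      1 / ((Fintype.card G : ℂ) ^ n * (n.factorial : ℂ)) *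
        (Fz z c x * (starRingEnd ℂ) (Fz z c x)) := by
    intro x
    have hconjF : (starRingEnd ℂ) (Fz z c x) =
        ((Real.sqrt ((n.factorial : ℝ) / P) : ℝ) : ℂ) *
          ∏ l, (starRingEnd ℂ) (z l) ^ WP.cycleCount x (c l) := by
      simp [Fz, map_mul, map_prod, map_pow, Complex.conj_ofReal]
      left; rfl
    have hprod : (∏ l, z l ^ WP.cycleCount x (c l)) *
        (∏ l, (starRingEnd ℂ) (z l) ^ WP.cycleCount x (c l)) =
        ∏ l, ((t l : ℝ) : ℂ) ^ WP.cycleCount x (c l) := by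
      rw [← Finset.prod_mul_distrib]
      refine Finset.prod_congr rfl fun l _ => ?_
      rw [← mul_pow, Complex.mul_conj]
    rw [hconjF, Fz]
    simp only [← ht, ← hPdef]
    rw [show ((Real.sqrt ((n.factorial : ℝ) / P) : ℝ) : ℂ) *
        (∏ l, z l ^ WP.cycleCount x (c l)) *
        (((Real.sqrt ((n.factorial : ℝ) / P) : ℝ) : ℂ) *
          ∏ l, (starRingEnd ℂ) (z l) ^ WP.cycleCount x (c l)) =
        (((Real.sqrt ((n.factorial : ℝ) / P) : ℝ) : ℂ) *
          ((Real.sqrt ((n.factorial : ℝ) / P) : ℝ) : ℂ)) *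
        ((∏ l, z l ^ WP.cycleCount x (c l)) *
          ∏ l, (starRingEnd ℂ) (z l) ^ WP.cycleCount x (c l)) by ring, hC2, hprod]
    rw [ewensP]
    push_cast
    rw [← hPdef]
    have h4 : (Fintype.card G : ℂ) ^ n ≠ 0 := pow_ne_zero _ hCG
    have h5 : ((n.factorial : ℕ) : ℂ) ≠ 0 := Nat.cast_ne_zero.2 n.factorial_ne_zero
    refine mul_left_cancel₀ (mul_ne_zero (mul_ne_zero h4 h5) hPne) ?_
    field_simp
  constructor
  · intro f g
    rw [Finset.mul_sum]
    refine Finset.sum_congr rfl fun x _ => ?_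
    rw [key x, map_mul]
    ring
  · intro w₁ w₂ x
    simp only [Fz]
    rw [mul_assoc, ← Finset.prod_mul_distrib]
    congr 1
    refine Finset.prod_congr rfl fun l _ => ?_
    rw [← zpow_natCast (z l) (WP.cycleCount x (c l)),
      ← zpow_natCast (z l) (WP.cycleCount (w₂⁻¹ * x * w₁) (c l)),
      ← zpow_add₀ (hz l)]
    congr 1
    omega

end WreathPaper
end
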